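/- arXiv:2008.01680 — 12 statements merged into one kernel-verified Lean document; each statement's English description precedes it below -/
import Mathlib

section
/- In the fixed-game matching setting with n ≥ 2, suppose that every Nash equilibrium of G is strictly Pareto dominated. Then there is no matching profile (μ,x,y) that is simultaneously Nash stable (i.e., for every i ∈ M the pair (x_i, y_{μ_i}) is a Nash equilibrium of G) and externally stable. -/
/-- External stability in the fixed-game matching setting: no unmatched pair `(i,j)`
can jointly deviate to a strategy profile that strictly Pareto improves their payoffs. -/
def ExtStableFixed {S T : Type*} (U V : S → T → ℝ) {n : ℕ}
    (μ : Equiv.Perm (Fin n)) (x : Fin n → S) (y : Fin n → T) : Prop :=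
  ∀ i j : Fin n, μ i ≠ j → ∀ (s : S) (t : T),
    ¬ (U (x i) (y (μ i)) < U s t ∧ V (x (μ.symm j)) (y j) < V s t)

/-- If every Nash equilibrium of the fixed game `G = (S,T,U,V)` is strictly Pareto
dominated, then (for `n ≥ 2`) no matching profile is simultaneously Nash stable and
externally stable. -/
theorem no_nash_stable_and_externally_stable
    {S T : Type*} [Nonempty S] [Nonempty T] (U V : S → T → ℝ)
    (n : ℕ) (hn : 2 ≤ n)
    (hdom : ∀ s : S, ∀ t : T, (∀ s', U s' t ≤ U s t) → (∀ t', V s t' ≤ V s t) →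
      ∃ s' t', U s t < U s' t' ∧ V s t < V s' t') :
    ¬ ∃ (μ : Equiv.Perm (Fin n)) (x : Fin n → S) (y : Fin n → T),
        (∀ i : Fin n, (∀ s', U s' (y (μ i)) ≤ U (x i) (y (μ i))) ∧
          (∀ t', V (x i) t' ≤ V (x i) (y (μ i)))) ∧
        ExtStableFixed U V μ x y := by
  rintro ⟨μ, x, y, hnash, hext⟩
  have hne : Nonempty (Fin n) := ⟨⟨0, by omega⟩⟩
  -- choose a couple maximizing the V-payoff
  obtain ⟨i, hi⟩ := Finite.exists_max (fun k : Fin n => V (x k) (y (μ k)))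
  obtain ⟨s', t', hU, hV⟩ := hdom (x i) (y (μ i)) (hnash i).1 (hnash i).2
  -- choose j ≠ μ i
  obtain ⟨j, hj⟩ : ∃ j : Fin n, μ i ≠ j := by
    by_contra h
    push_neg at h
    have h1 : μ i = ⟨0, by omega⟩ := h _
    have h2 : μ i = ⟨1, by omega⟩ := h _
    simp [h1, Fin.ext_iff] at h2
  refine hext i j hj s' t' ⟨hU, ?_⟩
  calc V (x (μ.symm j)) (y j) = V (x (μ.symm j)) (y (μ (μ.symm j))) := by simp
    _ ≤ V (x i) (y (μ i)) := hi _
    _ < V s' t' := hV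
end

section
/- Every matching game (with finite sets of men and women, nonempty compact strategy spaces, continuous payoff functions, and arbitrary individually rational payoffs) admits an externally stable matching profile. -/
/-- A (one-to-one, possibly partial) matching between two sides `M` and `W`. -/
structure Matching (M W : Type*) where
  muM : M → Option W
  muW : W → Option M
  coherent : ∀ i j, muM i = some j ↔ muW j = some i

variable {M W : Type*} {X : M → Type*} {Y : W → Type*}

/-- Utility of man `i` in the matching profile `(μ,x,y)`. -/
def uMan (U : ∀ i j, X i → Y j → ℝ) (ubar : M → ℝ)
    (μ : Matching M W) (x : ∀ i, X i) (y : ∀ j, Y j) (i : M) : ℝ :=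
  (μ.muM i).elim (ubar i) fun j => U i j (x i) (y j)

/-- Utility of woman `j` in the matching profile `(μ,x,y)`. -/
def vWoman (V : ∀ i j, X i → Y j → ℝ) (vbar : W → ℝ)
    (μ : Matching M W) (x : ∀ i, X i) (y : ∀ j, Y j) (j : W) : ℝ :=
  (μ.muW j).elim (vbar j) fun i => V i j (x i) (y j)

/-- External stability of a matching profile: individual rationality plus the
absence of blocking pairs. -/
def ExternallyStable (U V : ∀ i j, X i → Y j → ℝ) (ubar : M → ℝ) (vbar : W → ℝ)
    (μ : Matching M W) (x : ∀ i, X i) (y : ∀ j, Y j) : Prop :=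
  (∀ i, ubar i ≤ uMan U ubar μ x y i) ∧
  (∀ j, vbar j ≤ vWoman V vbar μ x y j) ∧
  ∀ i j, μ.muM i ≠ some j → ∀ (s : X i) (t : Y j),
    ¬ (uMan U ubar μ x y i < U i j s t ∧ vWoman V vbar μ x y j < V i j s t)

/-!
For `ε > 0`, compactness gives, for every couple, finitely many strategy pairs whose payoffs
come within `ε` of every feasible payoff pair. Treating these pairs as contracts gives a finite
matching market with contracts, and men-proposing deferred acceptance yields a profile that no
couple can improve by more than `ε` for both partners. There are finitely many matchings, so a
single matching `μ` works for every `ε`; the corresponding `ε`-stable strategy profiles form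
closed sets, decreasing as `ε ↓ 0`, in a compact space, and a profile in all of them is
externally stable.
-/

section DeferredAcceptance

variable {C α β : Type*} [LinearOrder α] [LinearOrder β]
  (man : C → M) (woman : C → W) (a : C → α) (b : C → β) (S : Finset C)

open scoped Classical

namespace DeferredAcceptance

/-- While the contracts in `R` stand rejected, man `i` proposes his favourite remaining one. -/
noncomputable def proposal (R : Finset C) (i : M) : Option C :=
  {c ∈ S | c ∉ R ∧ man c = i}.toList.argmax a

noncomputable def offers (R : Finset C) : Finset C :=
  {c ∈ S | proposal man a S R (man c) = some c}

noncomputable def held (R : Finset C) (j : W) : Option C :=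
  {c ∈ offers man a S R | woman c = j}.toList.argmax b

noncomputable def rejectStep (R : Finset C) : Finset C :=
  R ∪ {c ∈ offers man a S R | held man woman a b S R (woman c) ≠ some c}

def Justified (R : Finset C) : Prop :=
  R ⊆ S ∧ ∀ c ∈ R, ∃ c' ∈ offers man a S R, woman c' = woman c ∧ b c ≤ b c'

variable {man woman a b S} {R : Finset C} {c c' : C}

theorem proposal_spec {i : M} (h : proposal man a S R i = some c) :
    c ∈ S ∧ c ∉ R ∧ man c = i := by
  unfold proposal at h
  simpa using List.argmax_mem h

theorem exists_proposal (hc : c ∈ S) (hcR : c ∉ R) :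
    ∃ c', proposal man a S R (man c) = some c' ∧ a c ≤ a c' := by
  have hmem : c ∈ {c' ∈ S | c' ∉ R ∧ man c' = man c}.toList := by simp [hc, hcR]
  obtain ⟨c', hc'⟩ := Option.ne_none_iff_exists'.mp
    (mt (List.argmax_eq_none (f := a)).mp (List.ne_nil_of_mem hmem))
  exact ⟨c', hc', List.le_of_mem_argmax hmem hc'⟩

theorem mem_offers : c ∈ offers man a S R ↔ proposal man a S R (man c) = some c :=
  ⟨fun h => (Finset.mem_filter.1 h).2, fun h => Finset.mem_filter.2 ⟨(proposal_spec h).1, h⟩⟩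

theorem notMem_of_mem_offers (h : c ∈ offers man a S R) : c ∉ R :=
  (proposal_spec (mem_offers.1 h)).2.1

theorem eq_of_mem_offers (hc : c ∈ offers man a S R) (hc' : c' ∈ offers man a S R)
    (h : man c = man c') : c = c' :=
  Option.some_injective _ ((mem_offers.1 hc).symm.trans (h ▸ mem_offers.1 hc'))

theorem held_spec {j : W} (h : held man woman a b S R j = some c) :
    c ∈ offers man a S R ∧ woman c = j := by
  unfold held at h
  simpa using List.argmax_mem h

theorem exists_held (hc : c ∈ offers man a S R) :
    ∃ c', held man woman a b S R (woman c) = some c' ∧ b c ≤ b c' := by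
  have hmem : c ∈ {c' ∈ offers man a S R | woman c' = woman c}.toList := by simp [hc]
  obtain ⟨c', hc'⟩ := Option.ne_none_iff_exists'.mp
    (mt (List.argmax_eq_none (f := b)).mp (List.ne_nil_of_mem hmem))
  exact ⟨c', hc', List.le_of_mem_argmax hmem hc'⟩

/-- A held offer is proposed again: none of its man's contracts has been newly rejected. -/
theorem mem_offers_rejectStep_of_held {j : W} (h : held man woman a b S R j = some c) :
    c ∈ offers man a S (rejectStep man woman a b S R) := by
  obtain ⟨hc, rfl⟩ := held_spec h
  have hsame : {c' ∈ S | c' ∉ rejectStep man woman a b S R ∧ man c' = man c} =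
      {c' ∈ S | c' ∉ R ∧ man c' = man c} := by
    ext c'
    simp only [rejectStep, Finset.mem_filter, Finset.mem_union, not_or, not_and, not_not]
    refine ⟨fun ⟨hS, ⟨hR, _⟩, hm⟩ => ⟨hS, hR, hm⟩, fun ⟨hS, hR, hm⟩ => ⟨hS, ⟨hR, ?_⟩, hm⟩⟩
    intro hc'
    rwa [eq_of_mem_offers hc' hc hm]
  rw [mem_offers, proposal, hsame]
  exact mem_offers.1 hc

theorem Justified.rejectStep (hR : Justified man woman a b S R) :
    Justified man woman a b S (rejectStep man woman a b S R) := by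
  refine ⟨Finset.union_subset hR.1 ((Finset.filter_subset _ _).trans (Finset.filter_subset _ _)),
    fun c hc => ?_⟩
  obtain ⟨c', hc', hw, hle⟩ : ∃ c' ∈ offers man a S R, woman c' = woman c ∧ b c ≤ b c' := by
    rcases Finset.mem_union.1 hc with hc | hc
    · exact hR.2 c hc
    · exact ⟨c, (Finset.mem_filter.1 hc).1, rfl, le_rfl⟩
  obtain ⟨c'', hc'', hle'⟩ := exists_held (woman := woman) (b := b) hc'
  exact ⟨c'', mem_offers_rejectStep_of_held hc'', (held_spec hc'').2.trans hw, hle.trans hle'⟩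

/-- A justified set of rejections of maximal size is a fixed point, since the step only grows it. -/
theorem exists_justified_rejectStep_eq :
    ∃ R, Justified man woman a b S R ∧ rejectStep man woman a b S R = R := by
  obtain ⟨R, hR, hmax⟩ := Finset.exists_max_image {R ∈ S.powerset | Justified man woman a b S R}
    Finset.card
    ⟨∅, Finset.mem_filter.2 ⟨Finset.empty_mem_powerset S, Finset.empty_subset S, by simp⟩⟩
  rw [Finset.mem_filter] at hR
  have hstep := hR.2.rejectStep
  refine ⟨R, hR.2, (Finset.eq_of_subset_of_card_le Finset.subset_union_left (hmax _ ?_)).symm⟩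
  exact Finset.mem_filter.2 ⟨Finset.mem_powerset.2 hstep.1, hstep⟩

end DeferredAcceptance

open DeferredAcceptance in
theorem exists_stable_contracts :
    ∃ A ⊆ S, Set.InjOn man A ∧ Set.InjOn woman A ∧ ∀ c ∈ S,
      (∃ c' ∈ A, man c' = man c ∧ a c ≤ a c') ∨ (∃ c' ∈ A, woman c' = woman c ∧ b c ≤ b c') := by
  obtain ⟨R, hR, hfix⟩ := exists_justified_rejectStep_eq (man := man) (woman := woman) (a := a)
    (b := b) (S := S)
  have hheld : ∀ c ∈ offers man a S R, held man woman a b S R (woman c) = some c := by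
    intro c hc
    by_contra h
    exact notMem_of_mem_offers hc (hfix ▸ Finset.mem_union_right _ (Finset.mem_filter.2 ⟨hc, h⟩))
  refine ⟨offers man a S R, Finset.filter_subset _ _,
    fun c hc c' hc' h => eq_of_mem_offers hc hc' h,
    fun c hc c' hc' h => Option.some_injective _ ((hheld c hc).symm.trans (h ▸ hheld c' hc')),
    fun c hc => ?_⟩
  by_cases hcR : c ∈ R
  · exact .inr (hR.2 c hcR)
  · obtain ⟨c', hc', hle⟩ := exists_proposal (man := man) (a := a) hc hcR
    have hman := (proposal_spec hc').2.2
    exact .inl ⟨c', mem_offers.2 (hman ▸ hc'), hman, hle⟩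

end DeferredAcceptance

theorem exists_finset_forall_dist_lt {P E : Type*} [TopologicalSpace P] [CompactSpace P]
    [PseudoMetricSpace E] {f : P → E} (hf : Continuous f) {ε : ℝ} (hε : 0 < ε) :
    ∃ F : Finset P, ∀ p, ∃ q ∈ F, dist (f p) (f q) < ε := by
  obtain ⟨F, hF⟩ := CompactSpace.elim_nhds_subcover (fun q => f ⁻¹' Metric.ball (f q) ε)
    fun q => hf.continuousAt.preimage_mem_nhds (Metric.ball_mem_nhds _ hε)
  refine ⟨F, fun p => ?_⟩
  simpa using (Set.ext_iff.1 hF p).2 trivial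

theorem Matching.muM_injective :
    Function.Injective (Matching.muM : Matching M W → M → Option W) := by
  rintro ⟨f, g, hfg⟩ ⟨f', g', hfg'⟩ (rfl : f = f')
  obtain rfl : g = g' := funext fun j => Option.ext fun i => (hfg i j).symm.trans (hfg' i j)
  rfl

instance [Finite M] [Finite W] : Finite (Matching M W) :=
  Finite.of_injective _ Matching.muM_injective

section ContractProfile

-- A contract `⟨i, j, s, t⟩` matches man `i` with woman `j`, who play `s` and `t`.
variable (A : Finset (Σ i j, X i × Y j))

open scoped Classical in
noncomputable def manContract (i : M) : Option (Σ j, X i × Y j) :=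
  if h : ∃ p, ⟨i, p⟩ ∈ A then some h.choose else none

open scoped Classical in
noncomputable def womanContract (j : W) : Option (Σ i, X i × Y j) :=
  if h : ∃ q : Σ i, X i × Y j, ⟨q.1, j, q.2⟩ ∈ A then some h.choose else none

variable {A}

theorem manContract_eq_some_iff (hA : Set.InjOn Sigma.fst (A : Set (Σ i j, X i × Y j)))
    {i : M} {p : Σ j, X i × Y j} : manContract A i = some p ↔ ⟨i, p⟩ ∈ A := by
  unfold manContract
  split_ifs with h
  · rw [Option.some_inj]
    exact ⟨fun he => he ▸ h.choose_spec,
      fun hp => sigma_mk_injective (β := fun i => Σ j, X i × Y j) (hA h.choose_spec hp rfl)⟩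
  · simpa using fun hp => h ⟨p, hp⟩

theorem womanContract_eq_some_iff
    (hA : Set.InjOn (fun c => c.2.1) (A : Set (Σ i j, X i × Y j)))
    {j : W} {q : Σ i, X i × Y j} : womanContract A j = some q ↔ ⟨q.1, j, q.2⟩ ∈ A := by
  have hinj : Function.Injective fun q : Σ i, X i × Y j => (⟨q.1, j, q.2⟩ : Σ i j, X i × Y j) := by
    rintro ⟨i, st⟩ ⟨i', st'⟩ h
    simp only [Sigma.mk.inj_iff] at h
    obtain ⟨rfl, h⟩ := h
    simp_all
  unfold womanContract
  split_ifs with h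
  · rw [Option.some_inj]
    exact ⟨fun he => he ▸ h.choose_spec, fun hq => hinj (hA h.choose_spec hq rfl)⟩
  · simpa using fun hq => h ⟨q, hq⟩

variable [∀ i, Nonempty (X i)] [∀ j, Nonempty (Y j)]

noncomputable def contractMatching (hm : Set.InjOn Sigma.fst (A : Set (Σ i j, X i × Y j)))
    (hw : Set.InjOn (fun c => c.2.1) (A : Set (Σ i j, X i × Y j))) : Matching M W where
  muM i := (manContract A i).map Sigma.fst
  muW j := (womanContract A j).map Sigma.fst
  coherent i j := by
    simp [Option.map_eq_some_iff, Sigma.exists, manContract_eq_some_iff hm,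
      womanContract_eq_some_iff hw]

variable (A) in
noncomputable def contractX (i : M) : X i :=
  (manContract A i).elim (Classical.arbitrary _) fun p => p.2.1

variable (A) in
noncomputable def contractY (j : W) : Y j :=
  (womanContract A j).elim (Classical.arbitrary _) fun q => q.2.2

variable (hm : Set.InjOn Sigma.fst (A : Set (Σ i j, X i × Y j)))
  (hw : Set.InjOn (fun c => c.2.1) (A : Set (Σ i j, X i × Y j)))

theorem uMan_contractMatching (U : ∀ i j, X i → Y j → ℝ) (ubar : M → ℝ) (i : M) :
    uMan U ubar (contractMatching hm hw) (contractX A) (contractY A) i =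
      (manContract A i).elim (ubar i) fun p => U i p.1 p.2.1 p.2.2 := by
  rcases h : manContract A i with _ | ⟨j, s, t⟩
  · simp [uMan, contractMatching, h]
  · have hj : womanContract A j = some ⟨i, s, t⟩ :=
      (womanContract_eq_some_iff hw).2 ((manContract_eq_some_iff hm).1 h)
    simp [uMan, contractMatching, contractX, contractY, h, hj]

theorem vWoman_contractMatching (V : ∀ i j, X i → Y j → ℝ) (vbar : W → ℝ) (j : W) :
    vWoman V vbar (contractMatching hm hw) (contractX A) (contractY A) j =
      (womanContract A j).elim (vbar j) fun q => V q.1 j q.2.1 q.2.2 := by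
  rcases h : womanContract A j with _ | ⟨i, s, t⟩
  · simp [vWoman, contractMatching, h]
  · have hi : manContract A i = some ⟨j, s, t⟩ :=
      (manContract_eq_some_iff hm).2 ((womanContract_eq_some_iff hw).1 h)
    simp [vWoman, contractMatching, contractX, contractY, h, hi]

variable {U V : ∀ i j, X i → Y j → ℝ} {ubar : M → ℝ} {vbar : W → ℝ}

theorem uMan_contractMatching_of_mem {c : Σ i j, X i × Y j} (hc : c ∈ A) :
    uMan U ubar (contractMatching hm hw) (contractX A) (contractY A) c.1 =
      U c.1 c.2.1 c.2.2.1 c.2.2.2 := by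
  rw [uMan_contractMatching, (manContract_eq_some_iff hm).2 hc]
  rfl

theorem vWoman_contractMatching_of_mem {c : Σ i j, X i × Y j} (hc : c ∈ A) :
    vWoman V vbar (contractMatching hm hw) (contractX A) (contractY A) c.2.1 =
      V c.1 c.2.1 c.2.2.1 c.2.2.2 := by
  rw [vWoman_contractMatching, (womanContract_eq_some_iff hw (q := ⟨c.1, c.2.2⟩)).2 hc]
  rfl

theorem le_uMan_contractMatching (hA : ∀ c ∈ A, ubar c.1 ≤ U c.1 c.2.1 c.2.2.1 c.2.2.2) (i : M) :
    ubar i ≤ uMan U ubar (contractMatching hm hw) (contractX A) (contractY A) i := by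
  rw [uMan_contractMatching]
  rcases h : manContract A i with _ | p
  · exact le_rfl
  · exact hA _ ((manContract_eq_some_iff hm).1 h)

theorem le_vWoman_contractMatching (hA : ∀ c ∈ A, vbar c.2.1 ≤ V c.1 c.2.1 c.2.2.1 c.2.2.2)
    (j : W) : vbar j ≤ vWoman V vbar (contractMatching hm hw) (contractX A) (contractY A) j := by
  rw [vWoman_contractMatching]
  rcases h : womanContract A j with _ | q
  · exact le_rfl
  · exact hA _ ((womanContract_eq_some_iff hw).1 h)

end ContractProfile

section ApproxStable

def ApproxStable (U V : ∀ i j, X i → Y j → ℝ) (ubar : M → ℝ) (vbar : W → ℝ) (ε : ℝ)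
    (μ : Matching M W) (x : ∀ i, X i) (y : ∀ j, Y j) : Prop :=
  (∀ i, ubar i ≤ uMan U ubar μ x y i) ∧
  (∀ j, vbar j ≤ vWoman V vbar μ x y j) ∧
  ∀ i j (s : X i) (t : Y j),
    U i j s t ≤ uMan U ubar μ x y i + ε ∨ V i j s t ≤ vWoman V vbar μ x y j + ε

variable {U V : ∀ i j, X i → Y j → ℝ} {ubar : M → ℝ} {vbar : W → ℝ} {μ : Matching M W}
  {x : ∀ i, X i} {y : ∀ j, Y j}

theorem ApproxStable.mono {ε ε' : ℝ} (h : ApproxStable U V ubar vbar ε μ x y) (hε : ε ≤ ε') :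
    ApproxStable U V ubar vbar ε' μ x y :=
  ⟨h.1, h.2.1, fun i j s t => (h.2.2 i j s t).imp (·.trans (by linarith)) (·.trans (by linarith))⟩

theorem externallyStable_of_forall_approxStable
    (h : ∀ ε > 0, ApproxStable U V ubar vbar ε μ x y) : ExternallyStable U V ubar vbar μ x y := by
  refine ⟨(h 1 one_pos).1, (h 1 one_pos).2.1, fun i j _ s t ⟨hu, hv⟩ => ?_⟩
  set d := min (U i j s t - uMan U ubar μ x y i) (V i j s t - vWoman V vbar μ x y j)
  obtain ⟨hdu, hdv⟩ := le_min_iff.1 (le_refl d)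
  rcases (h (d / 2) (by positivity)).2.2 i j s t with hle | hle <;> linarith

variable [∀ i, TopologicalSpace (X i)] [∀ j, TopologicalSpace (Y j)]

theorem continuous_uMan (hU : ∀ i j, Continuous fun p : X i × Y j => U i j p.1 p.2)
    (ubar : M → ℝ) (μ : Matching M W) (i : M) :
    Continuous fun z : (∀ i, X i) × (∀ j, Y j) => uMan U ubar μ z.1 z.2 i := by
  unfold uMan
  cases μ.muM i with
  | none => exact continuous_const
  | some j => exact (hU i j).comp (((continuous_apply i).comp continuous_fst).prodMk
    ((continuous_apply j).comp continuous_snd))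

theorem continuous_vWoman (hV : ∀ i j, Continuous fun p : X i × Y j => V i j p.1 p.2)
    (vbar : W → ℝ) (μ : Matching M W) (j : W) :
    Continuous fun z : (∀ i, X i) × (∀ j, Y j) => vWoman V vbar μ z.1 z.2 j := by
  unfold vWoman
  cases μ.muW j with
  | none => exact continuous_const
  | some i => exact (hV i j).comp (((continuous_apply i).comp continuous_fst).prodMk
    ((continuous_apply j).comp continuous_snd))

theorem isClosed_setOf_approxStable (hU : ∀ i j, Continuous fun p : X i × Y j => U i j p.1 p.2)
    (hV : ∀ i j, Continuous fun p : X i × Y j => V i j p.1 p.2) (ε : ℝ) (μ : Matching M W) :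
    IsClosed {z : (∀ i, X i) × (∀ j, Y j) | ApproxStable U V ubar vbar ε μ z.1 z.2} := by
  have hu := continuous_uMan hU ubar μ
  have hv := continuous_vWoman hV vbar μ
  simp only [ApproxStable, Set.ofPred_and, Set.ofPred_forall, Set.ofPred_or]
  exact (isClosed_iInter fun i => isClosed_le continuous_const (hu i)).inter
    ((isClosed_iInter fun j => isClosed_le continuous_const (hv j)).inter
    (isClosed_iInter fun i => isClosed_iInter fun j => isClosed_iInter fun s => isClosed_iInter
      fun t => (isClosed_le continuous_const ((hu i).add continuous_const)).union
        (isClosed_le continuous_const ((hv j).add continuous_const))))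

end ApproxStable

section Existence

variable [Fintype M] [Fintype W]
  [∀ i, TopologicalSpace (X i)] [∀ i, CompactSpace (X i)] [∀ i, Nonempty (X i)]
  [∀ j, TopologicalSpace (Y j)] [∀ j, CompactSpace (Y j)] [∀ j, Nonempty (Y j)]
  {U V : ∀ i j, X i → Y j → ℝ}
  (hU : ∀ i j, Continuous fun p : X i × Y j => U i j p.1 p.2)
  (hV : ∀ i j, Continuous fun p : X i × Y j => V i j p.1 p.2)
  (ubar : M → ℝ) (vbar : W → ℝ)

include hU hV

theorem exists_approxStable {ε : ℝ} (hε : 0 < ε) :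
    ∃ μ x y, ApproxStable U V ubar vbar ε μ x y := by
  classical
  choose F hF using fun i j => exists_finset_forall_dist_lt ((hU i j).prodMk (hV i j)) hε
  let S : Finset (Σ i j, X i × Y j) :=
    {c ∈ Finset.univ.sigma fun i => Finset.univ.sigma fun j => F i j |
      ubar c.1 ≤ U c.1 c.2.1 c.2.2.1 c.2.2.2 ∧ vbar c.2.1 ≤ V c.1 c.2.1 c.2.2.1 c.2.2.2}
  obtain ⟨A, hAS, hm, hw, hdom⟩ := exists_stable_contracts Sigma.fst
    (fun c : Σ i j, X i × Y j => c.2.1) (fun c => U c.1 c.2.1 c.2.2.1 c.2.2.2)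
    (fun c => V c.1 c.2.1 c.2.2.1 c.2.2.2) S
  have hIRu := le_uMan_contractMatching hm hw (U := U) (ubar := ubar) fun c hc =>
    (Finset.mem_filter.1 (hAS hc)).2.1
  have hIRv := le_vWoman_contractMatching hm hw (V := V) (vbar := vbar) fun c hc =>
    (Finset.mem_filter.1 (hAS hc)).2.2
  refine ⟨contractMatching hm hw, contractX A, contractY A, hIRu, hIRv, fun i j s t => ?_⟩
  by_contra! h
  obtain ⟨q, hqF, hq⟩ := hF i j (s, t)
  simp only [Prod.dist_eq, Real.dist_eq, max_lt_iff, abs_lt] at hq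
  have hc : ⟨i, j, q⟩ ∈ S := Finset.mem_filter.2
    ⟨by simp [hqF], by linarith [hIRu i], by linarith [hIRv j]⟩
  rcases hdom _ hc with ⟨c, hcA, rfl, hle⟩ | ⟨c, hcA, rfl, hle⟩
  · linarith [uMan_contractMatching_of_mem hm hw (U := U) (ubar := ubar) hcA]
  · linarith [vWoman_contractMatching_of_mem hm hw (V := V) (vbar := vbar) hcA]

theorem exists_matching_forall_approxStable :
    ∃ μ : Matching M W, ∀ ε > 0, ∃ x y, ApproxStable U V ubar vbar ε μ x y := by
  by_contra! h
  choose δ hδ hδμ using h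
  have : Nonempty (Matching M W) := let ⟨μ, _⟩ := exists_approxStable hU hV ubar vbar one_pos; ⟨μ⟩
  obtain ⟨μ₀, hμ₀⟩ := Finite.exists_min δ
  obtain ⟨μ, x, y, hs⟩ := exists_approxStable hU hV ubar vbar (hδ μ₀)
  exact hδμ μ x y (hs.mono (hμ₀ μ))

end Existence

/-- Every matching game with finite sets of agents, nonempty compact strategy
spaces and continuous payoff functions admits an externally stable matching
profile. -/
theorem exists_externally_stable_matching_profile
    {M W : Type*} [Fintype M] [Fintype W]
    {X : M → Type*} {Y : W → Type*}
    [∀ i, TopologicalSpace (X i)] [∀ i, CompactSpace (X i)] [∀ i, Nonempty (X i)]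
    [∀ j, TopologicalSpace (Y j)] [∀ j, CompactSpace (Y j)] [∀ j, Nonempty (Y j)]
    (U V : ∀ i j, X i → Y j → ℝ)
    (hU : ∀ i j, Continuous fun p : X i × Y j => U i j p.1 p.2)
    (hV : ∀ i j, Continuous fun p : X i × Y j => V i j p.1 p.2)
    (ubar : M → ℝ) (vbar : W → ℝ) :
    ∃ (μ : Matching M W) (x : ∀ i, X i) (y : ∀ j, Y j),
      ExternallyStable U V ubar vbar μ x y := by
  obtain ⟨μ, hμ⟩ := exists_matching_forall_approxStable hU hV ubar vbar
  let K : Set.Ioi (0 : ℝ) → Set ((∀ i, X i) × (∀ j, Y j)) :=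
    fun ε => {z | ApproxStable U V ubar vbar ε μ z.1 z.2}
  have hK : ∀ ε, IsClosed (K ε) := fun ε => isClosed_setOf_approxStable hU hV ε μ
  obtain ⟨z, hz⟩ := IsCompact.nonempty_iInter_of_directed_nonempty_isCompact_isClosed K
    (Monotone.directed_ge fun ε ε' hεε' z hz => ApproxStable.mono hz hεε')
    (fun ε => let ⟨x, y, h⟩ := hμ ε ε.2; ⟨(x, y), h⟩) (fun ε => (hK ε).isCompact) hK
  exact ⟨μ, z.1, z.2, externallyStable_of_forall_approxStable fun ε hε =>
    Set.mem_iInter.1 hz ⟨ε, hε⟩⟩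
end

section
/- Let π=(μ,x,y) and π'=(μ',x',y') be two externally stable matching profiles of the same matching game satisfying condition (**): for every man i, if u_i(π) = u_i(π') then i has the same partner (or is single) in μ and μ', and for every woman j, if v_j(π) = v_j(π') then j has the same partner (or is single) in μ and μ'. Define π∨ = (μ∨,x∨,y∨) by matching each man i as in whichever of π, π' gives him the greater utility (leaving him single if that is his better option), each matched man and his partner playing the strategy pair from that profile. Then μ∨ is a well-defined matching (no woman is assigned to two different men) and π∨ is externally stable. -/
variable {M W : Type*} {X : M → Type*} {Y : W → Type*}

namespace Matching

theorem eq_of_muM_eq_some {μ : Matching M W} {i i' : M} {j : W}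
    (h : μ.muM i = some j) (h' : μ.muM i' = some j) : i = i' :=
  Option.some.inj (((μ.coherent i j).mp h).symm.trans ((μ.coherent i' j).mp h'))

theorem eq_of_muW_eq_some {μ : Matching M W} {i : M} {j j' : W}
    (h : μ.muW j = some i) (h' : μ.muW j' = some i) : j = j' :=
  Option.some.inj (((μ.coherent i j).mpr h).symm.trans ((μ.coherent i j').mpr h'))

open Classical in
noncomputable def ofMuM (f : M → Option W)
    (hf : ∀ {i i' j}, f i = some j → f i' = some j → i = i') : Matching M W where
  muM := f
  muW j := if h : ∃ i, f i = some j then some h.choose else none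
  coherent i j := by
    constructor
    · intro hi
      have hex : ∃ i, f i = some j := ⟨i, hi⟩
      rw [dif_pos hex, hf hex.choose_spec hi]
    · intro hj
      split_ifs at hj with hex
      exact Option.some.inj hj ▸ hex.choose_spec

theorem exists_muW_eq_some_mem_of_closed [Finite M] (μ μ' : Matching M W) {A : Set M}
    (hA : ∀ i ∈ A, ∃ j i₂, μ'.muM i = some j ∧ μ.muW j = some i₂ ∧ i₂ ∈ A)
    {i : M} {j : W} (hi : i ∈ A) (hj : μ.muM i = some j) :
    ∃ i', μ'.muW j = some i' ∧ i' ∈ A := by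
  -- `a ↦ μ⁻¹ (μ' a)` is injective on the finite set `A`, hence onto.
  choose partner next hpartner hnext hmem using hA
  let f : A → A := fun a => ⟨next a a.2, hmem a a.2⟩
  have hf : Function.Injective f := by
    rintro ⟨a, ha⟩ ⟨b, hb⟩ hab
    have hnext_eq : next a ha = next b hb := congrArg Subtype.val hab
    have hpartner_eq : partner a ha = partner b hb :=
      μ.eq_of_muW_eq_some (hnext a ha) (hnext_eq ▸ hnext b hb)
    exact Subtype.ext (μ'.eq_of_muM_eq_some (hpartner a ha) (hpartner_eq ▸ hpartner b hb))
  obtain ⟨⟨a, ha⟩, hfa⟩ := Finite.surjective_of_injective hf ⟨i, hi⟩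
  have hnext_eq : next a ha = i := congrArg Subtype.val hfa
  have hpartner_eq : partner a ha = j :=
    μ.eq_of_muW_eq_some (hnext a ha) (hnext_eq ▸ (μ.coherent i j).mp hj)
  exact ⟨a, (μ'.coherent a j).mp (hpartner_eq ▸ hpartner a ha), ha⟩

end Matching

noncomputable def menMaxMuM (U : ∀ i j, X i → Y j → ℝ) (ubar : M → ℝ) (μ μ' : Matching M W)
    (x x' : ∀ i, X i) (y y' : ∀ j, Y j) (i : M) : Option W :=
  if uMan U ubar μ' x' y' i ≤ uMan U ubar μ x y i then μ.muM i else μ'.muM i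

section Profiles

variable {U V : ∀ i j, X i → Y j → ℝ} {ubar : M → ℝ} {vbar : W → ℝ}
  {μ μ' ν : Matching M W} {x x' xv : ∀ i, X i} {y y' yv : ∀ j, Y j} {i : M} {j : W}

theorem uMan_of_muM_eq_some (h : μ.muM i = some j) :
    uMan U ubar μ x y i = U i j (x i) (y j) := by
  simp [uMan, h]

theorem uMan_of_muM_eq_none (h : μ.muM i = none) : uMan U ubar μ x y i = ubar i := by
  simp [uMan, h]

theorem vWoman_of_muW_eq_some (h : μ.muW j = some i) :
    vWoman V vbar μ x y j = V i j (x i) (y j) := by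
  simp [vWoman, h]

theorem vWoman_of_muW_eq_none (h : μ.muW j = none) : vWoman V vbar μ x y j = vbar j := by
  simp [vWoman, h]

theorem uMan_eq_max
    (hν : ∀ i, uMan U ubar μ' x' y' i ≤ uMan U ubar μ x y i → ν.muM i = μ.muM i)
    (hν' : ∀ i, uMan U ubar μ x y i ≤ uMan U ubar μ' x' y' i → ν.muM i = μ'.muM i)
    (hxy : ∀ i j, ν.muM i = some j →
      ((uMan U ubar μ' x' y' i ≤ uMan U ubar μ x y i ∧ xv i = x i ∧ yv j = y j) ∨
       (uMan U ubar μ x y i ≤ uMan U ubar μ' x' y' i ∧ xv i = x' i ∧ yv j = y' j)))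
    (i : M) : uMan U ubar ν xv yv i = max (uMan U ubar μ x y i) (uMan U ubar μ' x' y' i) := by
  cases hi : ν.muM i with
  | none =>
    rw [uMan_of_muM_eq_none hi]
    rcases le_total (uMan U ubar μ' x' y' i) (uMan U ubar μ x y i) with hle | hle
    · rw [max_eq_left hle, uMan_of_muM_eq_none ((hν i hle).symm.trans hi)]
    · rw [max_eq_right hle, uMan_of_muM_eq_none ((hν' i hle).symm.trans hi)]
  | some j =>
    rw [uMan_of_muM_eq_some hi]
    rcases hxy i j hi with ⟨hle, hx, hy⟩ | ⟨hle, hx, hy⟩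
    · rw [max_eq_left hle, uMan_of_muM_eq_some ((hν i hle).symm.trans hi), hx, hy]
    · rw [max_eq_right hle, uMan_of_muM_eq_some ((hν' i hle).symm.trans hi), hx, hy]

namespace ExternallyStable

theorem exists_muM_eq_some_of_lt (h : ExternallyStable U V ubar vbar μ x y)
    (hlt : uMan U ubar μ x y i < uMan U ubar μ' x' y' i) : ∃ j, μ'.muM i = some j := by
  cases hi : μ'.muM i with
  | none => exact absurd (h.1 i) (uMan_of_muM_eq_none hi ▸ hlt).not_ge
  | some j => exact ⟨j, rfl⟩

theorem exists_muW_eq_some_of_lt (h' : ExternallyStable U V ubar vbar μ' x' y')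
    (hlt : vWoman V vbar μ' x' y' j < vWoman V vbar μ x y j) : ∃ i, μ.muW j = some i := by
  cases hj : μ.muW j with
  | none => exact absurd (h'.2.1 j) (vWoman_of_muW_eq_none hj ▸ hlt).not_ge
  | some i => exact ⟨i, rfl⟩

theorem not_lt_and_lt (h : ExternallyStable U V ubar vbar μ x y)
    (hμ' : μ'.muM i = some j) (hne : μ.muM i ≠ some j) :
    ¬ (uMan U ubar μ x y i < uMan U ubar μ' x' y' i ∧
      vWoman V vbar μ x y j < vWoman V vbar μ' x' y' j) := by
  rw [uMan_of_muM_eq_some hμ', vWoman_of_muW_eq_some ((μ'.coherent i j).mp hμ')]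
  exact h.2.2 i j hne _ _

theorem of_max_le (h : ExternallyStable U V ubar vbar μ x y)
    (h' : ExternallyStable U V ubar vbar μ' x' y')
    (hman : ∀ i, max (uMan U ubar μ x y i) (uMan U ubar μ' x' y' i) ≤ uMan U ubar ν xv yv i)
    (hwoman : ∀ j,
      (ν.muW j = μ.muW j ∧ vWoman V vbar μ x y j ≤ vWoman V vbar ν xv yv j) ∨
      (ν.muW j = μ'.muW j ∧ vWoman V vbar μ' x' y' j ≤ vWoman V vbar ν xv yv j)) :
    ExternallyStable U V ubar vbar ν xv yv := by
  refine ⟨fun i => (h.1 i).trans ((le_max_left _ _).trans (hman i)), fun j => ?_, ?_⟩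
  · rcases hwoman j with ⟨-, hj⟩ | ⟨-, hj⟩
    exacts [(h.2.1 j).trans hj, (h'.2.1 j).trans hj]
  · rintro i j hne s t ⟨hu, hv⟩
    have hmax := (hman i).trans_lt hu
    rcases hwoman j with ⟨hμ, hj⟩ | ⟨hμ, hj⟩
    · refine h.2.2 i j ?_ s t ⟨(le_max_left _ _).trans_lt hmax, hj.trans_lt hv⟩
      rwa [Ne, μ.coherent, ← hμ, ← ν.coherent]
    · refine h'.2.2 i j ?_ s t ⟨(le_max_right _ _).trans_lt hmax, hj.trans_lt hv⟩
      rwa [Ne, μ'.coherent, ← hμ, ← ν.coherent]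

theorem vWoman_lt_of_uMan_lt (h : ExternallyStable U V ubar vbar μ x y)
    (hss : vWoman V vbar μ x y j = vWoman V vbar μ' x' y' j → μ.muW j = μ'.muW j)
    (hμ' : μ'.muM i = some j) (hne : μ.muM i ≠ some j)
    (hlt : uMan U ubar μ x y i < uMan U ubar μ' x' y' i) :
    vWoman V vbar μ' x' y' j < vWoman V vbar μ x y j := by
  refine lt_of_le_of_ne (not_lt.mp fun hv => h.not_lt_and_lt hμ' hne ⟨hlt, hv⟩) fun heq => hne ?_
  rw [μ.coherent, hss heq.symm, ← μ'.coherent]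
  exact hμ'

theorem uMan_lt_of_vWoman_lt (h' : ExternallyStable U V ubar vbar μ' x' y')
    (hss : uMan U ubar μ x y i = uMan U ubar μ' x' y' i → μ.muM i = μ'.muM i)
    (hμ : μ.muM i = some j) (hne : μ'.muM i ≠ some j)
    (hlt : vWoman V vbar μ' x' y' j < vWoman V vbar μ x y j) :
    uMan U ubar μ x y i < uMan U ubar μ' x' y' i := by
  refine lt_of_le_of_ne (not_lt.mp fun hu => h'.not_lt_and_lt hμ hne ⟨hu, hlt⟩) fun heq => hne ?_
  rw [← hss heq]
  exact hμ

theorem exists_muW_eq_some_lt_of_lt [Finite M] (h : ExternallyStable U V ubar vbar μ x y)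
    (h' : ExternallyStable U V ubar vbar μ' x' y')
    (hssM : ∀ i, uMan U ubar μ x y i = uMan U ubar μ' x' y' i → μ.muM i = μ'.muM i)
    (hssW : ∀ j, vWoman V vbar μ x y j = vWoman V vbar μ' x' y' j → μ.muW j = μ'.muW j)
    (hμ : μ.muM i = some j) (hlt : uMan U ubar μ x y i < uMan U ubar μ' x' y' i) :
    ∃ i', μ'.muW j = some i' ∧ uMan U ubar μ x y i' < uMan U ubar μ' x' y' i' := by
  refine μ.exists_muW_eq_some_mem_of_closed μ'
    (A := {i | uMan U ubar μ x y i < uMan U ubar μ' x' y' i}) (fun i hi => ?_) hlt hμ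
  obtain ⟨j, hj⟩ := h.exists_muM_eq_some_of_lt hi
  by_cases hμj : μ.muM i = some j
  · exact ⟨j, i, hj, (μ.coherent i j).mp hμj, hi⟩
  have hv := h.vWoman_lt_of_uMan_lt (hssW j) hj hμj hi
  obtain ⟨i₂, hi₂⟩ := h'.exists_muW_eq_some_of_lt hv
  have hμ₂ : μ.muM i₂ = some j := (μ.coherent i₂ j).mpr hi₂
  have hne : μ'.muM i₂ ≠ some j := fun hc => hμj (μ'.eq_of_muM_eq_some hj hc ▸ hμ₂)
  exact ⟨j, i₂, hj, hi₂, h'.uMan_lt_of_vWoman_lt (hssM i₂) hμ₂ hne hv⟩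

theorem eq_of_le_of_lt (h : ExternallyStable U V ubar vbar μ x y)
    (h' : ExternallyStable U V ubar vbar μ' x' y') {i₁ i₂ : M}
    (hssM : uMan U ubar μ x y i₁ = uMan U ubar μ' x' y' i₁ → μ.muM i₁ = μ'.muM i₁)
    (hssW : vWoman V vbar μ x y j = vWoman V vbar μ' x' y' j → μ.muW j = μ'.muW j)
    (h₁ : uMan U ubar μ' x' y' i₁ ≤ uMan U ubar μ x y i₁) (hμ₁ : μ.muM i₁ = some j)
    (h₂ : uMan U ubar μ x y i₂ < uMan U ubar μ' x' y' i₂) (hμ₂ : μ'.muM i₂ = some j) :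
    i₁ = i₂ := by
  by_contra hne
  have hv := h.vWoman_lt_of_uMan_lt hssW hμ₂ (fun hc => hne (μ.eq_of_muM_eq_some hμ₁ hc)) h₂
  exact h₁.not_gt
    (h'.uMan_lt_of_vWoman_lt hssM hμ₁ (fun hc => hne (μ'.eq_of_muM_eq_some hc hμ₂)) hv)

theorem menMaxMuM_injective (h : ExternallyStable U V ubar vbar μ x y)
    (h' : ExternallyStable U V ubar vbar μ' x' y')
    (hssM : ∀ i, uMan U ubar μ x y i = uMan U ubar μ' x' y' i → μ.muM i = μ'.muM i)
    (hssW : ∀ j, vWoman V vbar μ x y j = vWoman V vbar μ' x' y' j → μ.muW j = μ'.muW j)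
    {i i' : M} (hi : menMaxMuM U ubar μ μ' x x' y y' i = some j)
    (hi' : menMaxMuM U ubar μ μ' x x' y y' i' = some j) : i = i' := by
  unfold menMaxMuM at hi hi'
  split_ifs at hi hi' with h₁ h₂ h₂
  · exact μ.eq_of_muM_eq_some hi hi'
  · exact h.eq_of_le_of_lt h' (hssM i) (hssW j) h₁ hi (not_le.mp h₂) hi'
  · exact (h.eq_of_le_of_lt h' (hssM i') (hssW j) h₂ hi' (not_le.mp h₁) hi).symm
  · exact μ'.eq_of_muM_eq_some hi hi'

theorem muW_eq_none_or_muW_eq_none [Finite M]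
    (h : ExternallyStable U V ubar vbar μ x y) (h' : ExternallyStable U V ubar vbar μ' x' y')
    (hssM : ∀ i, uMan U ubar μ x y i = uMan U ubar μ' x' y' i → μ.muM i = μ'.muM i)
    (hssW : ∀ j, vWoman V vbar μ x y j = vWoman V vbar μ' x' y' j → μ.muW j = μ'.muW j)
    (hν : ∀ i, uMan U ubar μ' x' y' i ≤ uMan U ubar μ x y i → ν.muM i = μ.muM i)
    (hν' : ∀ i, uMan U ubar μ x y i ≤ uMan U ubar μ' x' y' i → ν.muM i = μ'.muM i)
    (hj : ν.muW j = none) : μ.muW j = none ∨ μ'.muW j = none := by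
  cases hμ : μ.muW j with
  | none => exact Or.inl rfl
  | some i₁ =>
    refine Or.inr ?_
    cases hμ' : μ'.muW j with
    | none => rfl
    | some i₂ =>
      have hν_ne : ∀ i, ν.muM i ≠ some j := fun i hi => by
        simp [(ν.coherent i j).mp hi] at hj
      have hμ₁ := (μ.coherent i₁ j).mpr hμ
      have h₁ : uMan U ubar μ x y i₁ < uMan U ubar μ' x' y' i₁ :=
        lt_of_not_ge fun hle => hν_ne i₁ ((hν i₁ hle).trans hμ₁)
      obtain ⟨i', hi', hlt⟩ := h.exists_muW_eq_some_lt_of_lt h' hssM hssW hμ₁ h₁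
      obtain rfl : i' = i₂ := Option.some.inj (hi'.symm.trans hμ')
      exact absurd ((hν' i' hlt.le).trans ((μ'.coherent i' j).mpr hμ')) (hν_ne i')

theorem muW_eq_and_vWoman_le [Finite M]
    (h : ExternallyStable U V ubar vbar μ x y) (h' : ExternallyStable U V ubar vbar μ' x' y')
    (hssM : ∀ i, uMan U ubar μ x y i = uMan U ubar μ' x' y' i → μ.muM i = μ'.muM i)
    (hssW : ∀ j, vWoman V vbar μ x y j = vWoman V vbar μ' x' y' j → μ.muW j = μ'.muW j)
    (hν : ∀ i, uMan U ubar μ' x' y' i ≤ uMan U ubar μ x y i → ν.muM i = μ.muM i)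
    (hν' : ∀ i, uMan U ubar μ x y i ≤ uMan U ubar μ' x' y' i → ν.muM i = μ'.muM i)
    (hxy : ∀ i j, ν.muM i = some j →
      ((uMan U ubar μ' x' y' i ≤ uMan U ubar μ x y i ∧ xv i = x i ∧ yv j = y j) ∨
       (uMan U ubar μ x y i ≤ uMan U ubar μ' x' y' i ∧ xv i = x' i ∧ yv j = y' j)))
    (j : W) :
    (ν.muW j = μ.muW j ∧ vWoman V vbar μ x y j ≤ vWoman V vbar ν xv yv j) ∨
      (ν.muW j = μ'.muW j ∧ vWoman V vbar μ' x' y' j ≤ vWoman V vbar ν xv yv j) := by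
  cases hj : ν.muW j with
  | some i =>
    have hi := (ν.coherent i j).mpr hj
    rw [vWoman_of_muW_eq_some hj]
    rcases hxy i j hi with ⟨hle, hx, hy⟩ | ⟨hle, hx, hy⟩
    · have hμ := (μ.coherent i j).mp ((hν i hle).symm.trans hi)
      exact Or.inl ⟨hμ.symm, by rw [vWoman_of_muW_eq_some hμ, hx, hy]⟩
    · have hμ := (μ'.coherent i j).mp ((hν' i hle).symm.trans hi)
      exact Or.inr ⟨hμ.symm, by rw [vWoman_of_muW_eq_some hμ, hx, hy]⟩
  | none =>
    rw [vWoman_of_muW_eq_none hj]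
    rcases h.muW_eq_none_or_muW_eq_none h' hssM hssW hν hν' hj with hμ | hμ
    · exact Or.inl ⟨hμ.symm, by rw [vWoman_of_muW_eq_none hμ]⟩
    · exact Or.inr ⟨hμ.symm, by rw [vWoman_of_muW_eq_none hμ]⟩

end ExternallyStable

end Profiles

theorem men_max_externally_stable_general
    {M W : Type*} [Fintype M]
    {X : M → Type*} {Y : W → Type*}
    (U V : ∀ i j, X i → Y j → ℝ)
    (ubar : M → ℝ) (vbar : W → ℝ)
    (μ μ' : Matching M W) (x x' : ∀ i, X i) (y y' : ∀ j, Y j)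
    (hstab : ExternallyStable U V ubar vbar μ x y)
    (hstab' : ExternallyStable U V ubar vbar μ' x' y')
    -- condition (**) for men
    (hssM : ∀ i, uMan U ubar μ x y i = uMan U ubar μ' x' y' i → μ.muM i = μ'.muM i)
    -- condition (**) for women
    (hssW : ∀ j, vWoman V vbar μ x y j = vWoman V vbar μ' x' y' j → μ.muW j = μ'.muW j) :
    ∃ ν : Matching M W,
      -- each man is matched as in whichever of the two profiles gives him the
      -- greater utility (at a tie the two agree by (**))
      (∀ i, uMan U ubar μ' x' y' i ≤ uMan U ubar μ x y i → ν.muM i = μ.muM i) ∧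
      (∀ i, uMan U ubar μ x y i ≤ uMan U ubar μ' x' y' i → ν.muM i = μ'.muM i) ∧
      -- any choice of strategies in which every matched couple plays the strategy
      -- pair coming from the selected (better-for-the-man) profile, strategies of
      -- unmatched agents being arbitrary, yields an externally stable profile
      ∀ (xv : ∀ i, X i) (yv : ∀ j, Y j),
        (∀ i j, ν.muM i = some j →
          ((uMan U ubar μ' x' y' i ≤ uMan U ubar μ x y i ∧ xv i = x i ∧ yv j = y j) ∨
           (uMan U ubar μ x y i ≤ uMan U ubar μ' x' y' i ∧ xv i = x' i ∧ yv j = y' j))) →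
        ExternallyStable U V ubar vbar ν xv yv := by
  let ν := Matching.ofMuM (menMaxMuM U ubar μ μ' x x' y y')
    (hstab.menMaxMuM_injective hstab' hssM hssW)
  have hν : ∀ i, uMan U ubar μ' x' y' i ≤ uMan U ubar μ x y i → ν.muM i = μ.muM i :=
    fun i hi => if_pos hi
  have hν' : ∀ i, uMan U ubar μ x y i ≤ uMan U ubar μ' x' y' i → ν.muM i = μ'.muM i := by
    intro i hi
    rcases hi.lt_or_eq with hlt | heq
    · exact if_neg hlt.not_ge
    · exact (hν i heq.ge).trans (hssM i heq)
  exact ⟨ν, hν, hν', fun xv yv hxy => hstab.of_max_le hstab'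
    (fun i => (uMan_eq_max hν hν' hxy i).ge)
    (hstab.muW_eq_and_vWoman_le hstab' hssM hssW hν hν' hxy)⟩

/-- Under condition (**), the men-maximum of two externally stable matching
profiles is a well-defined matching and, together with the corresponding
strategies, is externally stable. -/
theorem men_max_externally_stable
    {M W : Type*} [Fintype M] [Fintype W]
    {X : M → Type*} {Y : W → Type*}
    [∀ i, TopologicalSpace (X i)] [∀ i, CompactSpace (X i)] [∀ i, Nonempty (X i)]
    [∀ j, TopologicalSpace (Y j)] [∀ j, CompactSpace (Y j)] [∀ j, Nonempty (Y j)]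
    (U V : ∀ i j, X i → Y j → ℝ)
    (hU : ∀ i j, Continuous fun p : X i × Y j => U i j p.1 p.2)
    (hV : ∀ i j, Continuous fun p : X i × Y j => V i j p.1 p.2)
    (ubar : M → ℝ) (vbar : W → ℝ)
    (μ μ' : Matching M W) (x x' : ∀ i, X i) (y y' : ∀ j, Y j)
    (hstab : ExternallyStable U V ubar vbar μ x y)
    (hstab' : ExternallyStable U V ubar vbar μ' x' y')
    -- condition (**) for men
    (hssM : ∀ i, uMan U ubar μ x y i = uMan U ubar μ' x' y' i → μ.muM i = μ'.muM i)
    -- condition (**) for women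
    (hssW : ∀ j, vWoman V vbar μ x y j = vWoman V vbar μ' x' y' j → μ.muW j = μ'.muW j) :
    ∃ ν : Matching M W,
      -- each man is matched as in whichever of the two profiles gives him the
      -- greater utility (at a tie the two agree by (**))
      (∀ i, uMan U ubar μ' x' y' i ≤ uMan U ubar μ x y i → ν.muM i = μ.muM i) ∧
      (∀ i, uMan U ubar μ x y i ≤ uMan U ubar μ' x' y' i → ν.muM i = μ'.muM i) ∧
      -- any choice of strategies in which every matched couple plays the strategy
      -- pair coming from the selected (better-for-the-man) profile, strategies of
      -- unmatched agents being arbitrary, yields an externally stable profile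
      ∀ (xv : ∀ i, X i) (yv : ∀ j, Y j),
        (∀ i j, ν.muM i = some j →
          ((uMan U ubar μ' x' y' i ≤ uMan U ubar μ x y i ∧ xv i = x i ∧ yv j = y j) ∨
           (uMan U ubar μ x y i ≤ uMan U ubar μ' x' y' i ∧ xv i = x' i ∧ yv j = y' j))) →
        ExternallyStable U V ubar vbar ν xv yv :=
  men_max_externally_stable_general U V ubar vbar μ μ' x x' y y' hstab hstab' hssM hssW
end

section
/- Let ε ≥ 0 and let π=(μ,x,y) be an ε-externally stable matching profile of a matching game (i.e., π has no ε-blocking pair). Let (i,j) be a couple matched by μ, with outside options u_i⁰ and v_j⁰, and let (x̂,ŷ) ∈ X_i×Y_j satisfy U_{i,j}(x̂,ŷ) ≥ u_i⁰ and V_{i,j}(x̂,ŷ) ≥ v_j⁰. Then the matching profile obtained from π by replacing (x_i, y_j) by (x̂, ŷ) (keeping μ and all other strategies unchanged) is ε-externally stable. -/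
variable {M W : Type*} {X : M → Type*} {Y : W → Type*}

/-- `π` admits an ε-blocking pair: either an unmatched pair that can both improve
by more than `ε`, or a matched agent who prefers (by more than `ε`) being single. -/
def EpsBlocking (U V : ∀ i j, X i → Y j → ℝ) (ubar : M → ℝ) (vbar : W → ℝ) (ε : ℝ)
    (μ : Matching M W) (x : ∀ i, X i) (y : ∀ j, Y j) : Prop :=
  (∃ i j, μ.muM i ≠ some j ∧ ∃ (s : X i) (t : Y j),
      uMan U ubar μ x y i + ε < U i j s t ∧ vWoman V vbar μ x y j + ε < V i j s t) ∨
  (∃ i, (μ.muM i).isSome ∧ uMan U ubar μ x y i + ε < ubar i) ∨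
  (∃ j, (μ.muW j).isSome ∧ vWoman V vbar μ x y j + ε < vbar j)

/-- The outside option of man `i`: the supremum of his individually rational payoff
(when he is matched) and of everything he can get with a woman not matched to him
while improving her payoff by more than `ε`. -/
noncomputable def outsideM (U V : ∀ i j, X i → Y j → ℝ) (ubar : M → ℝ) (vbar : W → ℝ)
    (μ : Matching M W) (x : ∀ i, X i) (y : ∀ j, Y j) (ε : ℝ) (i : M) : ℝ :=
  sSup ({u : ℝ | (μ.muM i).isSome ∧ u = ubar i} ∪
    {u : ℝ | ∃ (b : W) (s : X i) (r : Y b), μ.muM i ≠ some b ∧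
      vWoman V vbar μ x y b + ε < V i b s r ∧ u = U i b s r})

/-- The outside option of woman `j`, defined symmetrically. -/
noncomputable def outsideW (U V : ∀ i j, X i → Y j → ℝ) (ubar : M → ℝ) (vbar : W → ℝ)
    (μ : Matching M W) (x : ∀ i, X i) (y : ∀ j, Y j) (ε : ℝ) (j : W) : ℝ :=
  sSup ({v : ℝ | (μ.muW j).isSome ∧ v = vbar j} ∪
    {v : ℝ | ∃ (a : M) (s : X a) (r : Y j), μ.muW j ≠ some a ∧
      uMan U ubar μ x y a + ε < U a j s r ∧ v = V a j s r})

/-- Replacing the strategy profile of a matched couple of an ε-externally stable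
matching profile by a contract that is feasible with respect to their outside
options preserves ε-external stability. -/
theorem feasible_replacement_preserves_stability
    {M W : Type*} [Fintype M] [Fintype W] [DecidableEq M] [DecidableEq W]
    {X : M → Type*} {Y : W → Type*}
    [∀ i, TopologicalSpace (X i)] [∀ i, CompactSpace (X i)] [∀ i, Nonempty (X i)]
    [∀ j, TopologicalSpace (Y j)] [∀ j, CompactSpace (Y j)] [∀ j, Nonempty (Y j)]
    (U V : ∀ i j, X i → Y j → ℝ)
    (hU : ∀ i j, Continuous fun p : X i × Y j => U i j p.1 p.2)
    (hV : ∀ i j, Continuous fun p : X i × Y j => V i j p.1 p.2)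
    (ubar : M → ℝ) (vbar : W → ℝ) (ε : ℝ) (hε : 0 ≤ ε)
    (μ : Matching M W) (x : ∀ i, X i) (y : ∀ j, Y j)
    (hstable : ¬ EpsBlocking U V ubar vbar ε μ x y)
    (i : M) (j : W) (hij : μ.muM i = some j)
    (xhat : X i) (yhat : Y j)
    (hfeas1 : outsideM U V ubar vbar μ x y ε i ≤ U i j xhat yhat)
    (hfeas2 : outsideW U V ubar vbar μ x y ε j ≤ V i j xhat yhat) :
    ¬ EpsBlocking U V ubar vbar ε μ (Function.update x i xhat)
        (Function.update y j yhat) := by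
  intro hblock
  have hji : μ.muW j = some i := (μ.coherent i j).mp hij
  set x' := Function.update x i xhat with hx'
  set y' := Function.update y j yhat with hy'
  -- boundedness of the man set
  have hbddM : BddAbove ({u : ℝ | (μ.muM i).isSome ∧ u = ubar i} ∪
      {u : ℝ | ∃ (b : W) (s : X i) (r : Y b), μ.muM i ≠ some b ∧
        vWoman V vbar μ x y b + ε < V i b s r ∧ u = U i b s r}) := by
    have h1 : BddAbove (⋃ b : W, Set.range fun p : X i × Y b => U i b p.1 p.2) := by
      rw [← Set.biUnion_univ]
      exact (Set.Finite.bddAbove_biUnion Set.finite_univ).mpr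
        fun b _ => (isCompact_range (hU i b)).bddAbove
    refine (h1.insert (ubar i)).mono ?_
    rintro u (⟨_, rfl⟩ | ⟨b, s, r, _, _, rfl⟩)
    · exact Set.mem_insert _ _
    · exact Set.mem_insert_of_mem _ (Set.mem_iUnion.mpr ⟨b, ⟨(s, r), rfl⟩⟩)
  have hbddW : BddAbove ({v : ℝ | (μ.muW j).isSome ∧ v = vbar j} ∪
      {v : ℝ | ∃ (a : M) (s : X a) (r : Y j), μ.muW j ≠ some a ∧
        uMan U ubar μ x y a + ε < U a j s r ∧ v = V a j s r}) := by
    have h1 : BddAbove (⋃ a : M, Set.range fun p : X a × Y j => V a j p.1 p.2) := by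
      rw [← Set.biUnion_univ]
      exact (Set.Finite.bddAbove_biUnion Set.finite_univ).mpr
        fun a _ => (isCompact_range (hV a j)).bddAbove
    refine (h1.insert (vbar j)).mono ?_
    rintro v (⟨_, rfl⟩ | ⟨a, s, r, _, _, rfl⟩)
    · exact Set.mem_insert _ _
    · exact Set.mem_insert_of_mem _ (Set.mem_iUnion.mpr ⟨a, ⟨(s, r), rfl⟩⟩)
  -- new utilities of the couple (i,j)
  have hui' : uMan U ubar μ x' y' i = U i j xhat yhat := by
    simp [uMan, hij, hx', hy']
  have hvj' : vWoman V vbar μ x' y' j = V i j xhat yhat := by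
    simp [vWoman, hji, hx', hy']
  -- utilities of everybody else are unchanged
  have hu' : ∀ a, a ≠ i → uMan U ubar μ x' y' a = uMan U ubar μ x y a := by
    intro a ha
    unfold uMan
    cases h : μ.muM a with
    | none => rfl
    | some b =>
      have hbj : b ≠ j := by
        rintro rfl
        exact ha (Option.some_injective _ (((μ.coherent a b).mp h).symm.trans hji))
      simp [hx', hy', Function.update_of_ne ha, Function.update_of_ne hbj]
  have hv' : ∀ b, b ≠ j → vWoman V vbar μ x' y' b = vWoman V vbar μ x y b := by
    intro b hb
    unfold vWoman
    cases h : μ.muW b with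
    | none => rfl
    | some a =>
      have hai : a ≠ i := by
        rintro rfl
        exact hb (Option.some_injective _ (((μ.coherent a b).mpr h).symm.trans hij))
      simp [hx', hy', Function.update_of_ne hb, Function.update_of_ne hai]
  unfold outsideM at hfeas1
  unfold outsideW at hfeas2
  obtain ⟨a, b, hab, s, t, h1, h2⟩ | ⟨a, ha, h1⟩ | ⟨b, hb, h1⟩ := hblock
  · by_cases hai : a = i
    · subst hai
      have hbj : b ≠ j := by rintro rfl; exact hab hij
      rw [hui'] at h1
      rw [hv' b hbj] at h2
      have hmem : U a b s t ∈ ({u : ℝ | (μ.muM a).isSome ∧ u = ubar a} ∪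
          {u : ℝ | ∃ (b : W) (s : X a) (r : Y b), μ.muM a ≠ some b ∧
            vWoman V vbar μ x y b + ε < V a b s r ∧ u = U a b s r}) :=
        Or.inr ⟨b, s, t, hab, h2, rfl⟩
      have hle := le_csSup hbddM hmem
      linarith
    · by_cases hbj : b = j
      · subst hbj
        have haj : μ.muW b ≠ some a := fun h => hab ((μ.coherent a b).mpr h)
        rw [hvj'] at h2
        rw [hu' a hai] at h1
        have hmem : V a b s t ∈ ({v : ℝ | (μ.muW b).isSome ∧ v = vbar b} ∪
            {v : ℝ | ∃ (a : M) (s : X a) (r : Y b), μ.muW b ≠ some a ∧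
              uMan U ubar μ x y a + ε < U a b s r ∧ v = V a b s r}) :=
          Or.inr ⟨a, s, t, haj, h1, rfl⟩
        have hle := le_csSup hbddW hmem
        linarith
      · rw [hu' a hai] at h1
        rw [hv' b hbj] at h2
        exact hstable (Or.inl ⟨a, b, hab, s, t, h1, h2⟩)
  · by_cases hai : a = i
    · subst hai
      rw [hui'] at h1
      have hmem : ubar a ∈ ({u : ℝ | (μ.muM a).isSome ∧ u = ubar a} ∪
          {u : ℝ | ∃ (b : W) (s : X a) (r : Y b), μ.muM a ≠ some b ∧
            vWoman V vbar μ x y b + ε < V a b s r ∧ u = U a b s r}) :=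
        Or.inl ⟨by simp [hij], rfl⟩
      have hle := le_csSup hbddM hmem
      linarith
    · rw [hu' a hai] at h1
      exact hstable (Or.inr (Or.inl ⟨a, ha, h1⟩))
  · by_cases hbj : b = j
    · subst hbj
      rw [hvj'] at h1
      have hmem : vbar b ∈ ({v : ℝ | (μ.muW b).isSome ∧ v = vbar b} ∪
          {v : ℝ | ∃ (a : M) (s : X a) (r : Y b), μ.muW b ≠ some a ∧
            uMan U ubar μ x y a + ε < U a b s r ∧ v = V a b s r}) :=
        Or.inl ⟨by simp [hji], rfl⟩
      have hle := le_csSup hbddW hmem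
      linarith
    · rw [hv' b hbj] at h1
      exact hstable (Or.inr (Or.inr ⟨b, hb, h1⟩))
end

section
/- Let X and Y be nonempty compact convex subsets of Hausdorff real topological vector spaces and g : X×Y→ℝ continuous. Then the zero-sum game (X,Y,g) is feasible if and only if it has a saddle point (equivalently, its value exists and is achieved by optimal strategies). -/
/-!
The lower value `x ↦ min_y g x y` and the upper value `y ↦ max_x g x y` are continuous, so on
connected strategy sets they take every intermediate value.

Feasible ⇒ saddle: let `(x', y')` be a constrained equilibrium for the outside options `(α, -β)`,
where `α = max_x min_y g` and `β = min_y max_x g`. If `g x' y' < β`, the intermediate value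
theorem in `x` gives player 1 a strict improvement that keeps player 2 above `-β`, which is not
allowed; so `β ≤ g x' y'`, symmetrically `g x' y' ≤ α`, and `β ≤ α` yields a saddle point.

Saddle ⇒ feasible: for a saddle point of value `w` and options `(u0, v0)`, the saddle point
itself is a constrained equilibrium if `u0 ≤ w ≤ -v0`. If `-v0 < w`, take `x'` whose lower value
is exactly `-v0` and a best reply `y'` to it: player 1 cannot improve without pushing player 2
below `v0`, and player 2 cannot improve at all. The case `w < u0` is symmetric.
-/

/-- A two-player game over strategy sets `X ⊆ E`, `Y ⊆ F` with payoffs `U, V` is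
feasible: for every pair of outside options admitting a feasible contract, there
exists a constrained Nash equilibrium. -/
def FeasibleOn {E F : Type*} (X : Set E) (Y : Set F) (U V : E → F → ℝ) : Prop :=
  ∀ u0 v0 : ℝ, (∃ x ∈ X, ∃ y ∈ Y, u0 ≤ U x y ∧ v0 ≤ V x y) →
    ∃ x' ∈ X, ∃ y' ∈ Y, u0 ≤ U x' y' ∧ v0 ≤ V x' y' ∧
      (∀ x ∈ X, U x' y' < U x y' → V x y' < v0) ∧
      (∀ y ∈ Y, V x' y' < V x' y → U x' y < u0)

open Set

theorem IsCompact.continuousOn_sInf_image {α β γ : Type*} [ConditionallyCompleteLinearOrder α]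
    [TopologicalSpace α] [OrderTopology α] [TopologicalSpace β] [TopologicalSpace γ]
    {f : γ → β → α} {s : Set γ} {K : Set β} (hK : IsCompact K) (hf : ContinuousOn ↿f (s ×ˢ K)) :
    ContinuousOn (fun x => sInf (f x '' K)) s := by
  have : CompactSpace K := isCompact_iff_compactSpace.mp hK
  have hf' : Continuous ↿fun (x : s) (y : K) => f x y :=
    hf.comp_continuous (continuous_subtype_val.prodMap continuous_subtype_val)
      fun p => ⟨p.1.2, p.2.2⟩
  have h := isCompact_univ.continuous_sInf hf'
  simp only [image_univ] at h
  rw [continuousOn_iff_continuous_domRestrict]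
  simp only [image_eq_range]
  exact h

theorem IsCompact.continuousOn_sSup_image {α β γ : Type*} [ConditionallyCompleteLinearOrder α]
    [TopologicalSpace α] [OrderTopology α] [TopologicalSpace β] [TopologicalSpace γ]
    {f : γ → β → α} {s : Set γ} {K : Set β} (hK : IsCompact K) (hf : ContinuousOn ↿f (s ×ˢ K)) :
    ContinuousOn (fun x => sSup (f x '' K)) s :=
  hK.continuousOn_sInf_image (α := αᵒᵈ) hf

theorem ContinuousOn.uncurry_swap {α β γ : Type*} [TopologicalSpace α] [TopologicalSpace β]
    [TopologicalSpace γ] {f : α → β → γ} {s : Set α} {t : Set β}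
    (hf : ContinuousOn ↿f (s ×ˢ t)) : ContinuousOn ↿(fun y x => f x y) (t ×ˢ s) :=
  hf.comp continuous_swap.continuousOn fun _ hp => ⟨hp.2, hp.1⟩

/-- On a preconnected set, `f` cannot jump over `(f a, c]`. -/
theorem IsPreconnected.le_apply_of_forall_lt_apply_imp_lt {α β : Type*} [TopologicalSpace α]
    [LinearOrder β] [TopologicalSpace β] [OrderClosedTopology β] [DenselyOrdered β]
    {s : Set α} (hs : IsPreconnected s) {f : α → β} (hf : ContinuousOn f s) {a b : α}
    (ha : a ∈ s) (hb : b ∈ s) {c : β} (hcb : c ≤ f b) (h : ∀ x ∈ s, f a < f x → c < f x) :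
    c ≤ f a := by
  by_contra! hac
  obtain ⟨d, had, hdc⟩ := exists_between hac
  obtain ⟨x, hx, rfl⟩ := hs.intermediate_value ha hb hf ⟨had.le, hdc.le.trans hcb⟩
  exact (h x hx had).not_gt hdc

section ZeroSum

variable {E F : Type*} {X : Set E} {Y : Set F} {g : E → F → ℝ}

def IsConstrainedNash (X : Set E) (Y : Set F) (U V : E → F → ℝ) (u0 v0 : ℝ) (x' : E) (y' : F) :
    Prop :=
  u0 ≤ U x' y' ∧ v0 ≤ V x' y' ∧
    (∀ x ∈ X, U x' y' < U x y' → V x y' < v0) ∧ (∀ y ∈ Y, V x' y' < V x' y → U x' y < u0)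

/-- A deviation of either player is blocked either because the payoff already sits on the
outside option of the opponent, or because the player is already best replying. -/
theorem isConstrainedNash_zeroSum {u0 v0 : ℝ} {x' : E} {y' : F} (hu : u0 ≤ g x' y')
    (hv : g x' y' ≤ -v0) (hx : g x' y' = -v0 ∨ ∀ x ∈ X, g x y' ≤ g x' y')
    (hy : g x' y' = u0 ∨ ∀ y ∈ Y, g x' y' ≤ g x' y) :
    IsConstrainedNash X Y g (fun x y => -g x y) u0 v0 x' y' := by
  refine ⟨hu, le_neg_of_le_neg hv, fun x hx' hlt => ?_, fun y hy' hlt => ?_⟩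
  · rcases hx with heq | hbest
    · linarith
    · linarith [hbest x hx']
  · rcases hy with heq | hbest
    · linarith
    · linarith [hbest y hy']

variable [TopologicalSpace E] [TopologicalSpace F]

theorem exists_isConstrainedNash_of_sInf_image_le (hX : IsPreconnected X) (hYcomp : IsCompact Y)
    (hYne : Y.Nonempty) (hg : ContinuousOn ↿g (X ×ˢ Y)) {u0 v0 : ℝ} (huv : u0 ≤ -v0)
    {x₀ x₁ : E} (hx₀ : x₀ ∈ X) (hx₁ : x₁ ∈ X) (h₀ : sInf (g x₀ '' Y) ≤ -v0)
    (h₁ : -v0 ≤ sInf (g x₁ '' Y)) :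
    ∃ x' ∈ X, ∃ y' ∈ Y, IsConstrainedNash X Y g (fun x y => -g x y) u0 v0 x' y' := by
  obtain ⟨x', hx', hx'v⟩ := hX.intermediate_value hx₀ hx₁ (hYcomp.continuousOn_sInf_image hg)
    ⟨h₀, h₁⟩
  obtain ⟨y', hy', hy'v, hy'best⟩ :=
    hYcomp.exists_sInf_image_eq_and_le hYne (hg.uncurry_left x' hx')
  have hval : g x' y' = -v0 := hy'v.symm.trans hx'v
  exact ⟨x', hx', y', hy', isConstrainedNash_zeroSum (hval ▸ huv) hval.le (.inl hval)
    (.inr hy'best)⟩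

theorem exists_isConstrainedNash_of_le_sSup_image (hY : IsPreconnected Y) (hXcomp : IsCompact X)
    (hXne : X.Nonempty) (hg : ContinuousOn ↿g (X ×ˢ Y)) {u0 v0 : ℝ} (huv : u0 ≤ -v0)
    {y₀ y₁ : F} (hy₀ : y₀ ∈ Y) (hy₁ : y₁ ∈ Y) (h₀ : sSup ((g · y₀) '' X) ≤ u0)
    (h₁ : u0 ≤ sSup ((g · y₁) '' X)) :
    ∃ x' ∈ X, ∃ y' ∈ Y, IsConstrainedNash X Y g (fun x y => -g x y) u0 v0 x' y' := by
  obtain ⟨y', hy', hy'v⟩ :=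
    hY.intermediate_value hy₀ hy₁ (hXcomp.continuousOn_sSup_image hg.uncurry_swap)
    ⟨h₀, h₁⟩
  obtain ⟨x', hx', hx'v, hx'best⟩ :=
    hXcomp.exists_sSup_image_eq_and_ge hXne (hg.uncurry_right y' hy')
  have hval : g x' y' = u0 := hx'v.symm.trans hy'v
  exact ⟨x', hx', y', hy', isConstrainedNash_zeroSum hval.ge (hval ▸ huv) (.inr hx'best)
    (.inl hval)⟩

theorem feasibleOn_of_isSaddle (hX : IsPreconnected X) (hY : IsPreconnected Y)
    (hXcomp : IsCompact X) (hYcomp : IsCompact Y) (hXne : X.Nonempty) (hYne : Y.Nonempty)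
    (hg : ContinuousOn ↿g (X ×ˢ Y)) {xs : E} {ys : F} (hxs : xs ∈ X) (hys : ys ∈ Y)
    (hxs_best : ∀ x ∈ X, g x ys ≤ g xs ys) (hys_best : ∀ y ∈ Y, g xs ys ≤ g xs y) :
    FeasibleOn X Y g fun x y => -g x y := by
  rintro u0 v0 ⟨x₀, hx₀, y₀, hy₀, hu₀, hv₀⟩
  have huv : u0 ≤ -v0 := hu₀.trans (le_neg_of_le_neg hv₀)
  rcases lt_or_ge (-v0) (g xs ys) with hw | hw
  · refine exists_isConstrainedNash_of_sInf_image_le hX hYcomp hYne hg huv hx₀ hxs ?_ ?_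
    · exact (csInf_le (hYcomp.bddBelow_image (hg.uncurry_left x₀ hx₀)) (mem_image_of_mem _ hy₀)).trans
        (le_neg_of_le_neg hv₀)
    · exact le_csInf (hYne.image _) (forall_mem_image.2 fun y hy => hw.le.trans (hys_best y hy))
  rcases lt_or_ge (g xs ys) u0 with hw' | hw'
  · refine exists_isConstrainedNash_of_le_sSup_image hY hXcomp hXne hg huv hys hy₀ ?_ ?_
    · exact csSup_le (hXne.image _) (forall_mem_image.2 fun x hx => (hxs_best x hx).trans hw'.le)
    · exact hu₀.trans
        (le_csSup (hXcomp.bddAbove_image (hg.uncurry_right y₀ hy₀)) (mem_image_of_mem _ hx₀))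
  · exact ⟨xs, hxs, ys, hys, isConstrainedNash_zeroSum hw' hw (.inr hxs_best) (.inr hys_best)⟩

theorem exists_isSaddle_of_feasibleOn (hX : IsPreconnected X) (hY : IsPreconnected Y)
    (hXcomp : IsCompact X) (hYcomp : IsCompact Y) (hXne : X.Nonempty) (hYne : Y.Nonempty)
    (hg : ContinuousOn ↿g (X ×ˢ Y)) (hfeas : FeasibleOn X Y g fun x y => -g x y) :
    ∃ xs ∈ X, ∃ ys ∈ Y, (∀ x ∈ X, g x ys ≤ g xs ys) ∧ (∀ y ∈ Y, g xs ys ≤ g xs y) := by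
  obtain ⟨xs, hxs, hxs_max⟩ := hXcomp.exists_isMaxOn hXne (hYcomp.continuousOn_sInf_image hg)
  obtain ⟨ys, hys, hys_min⟩ :=
    hYcomp.exists_isMinOn hYne (hXcomp.continuousOn_sSup_image hg.uncurry_swap)
  set α := sInf (g xs '' Y)
  set β := sSup ((g · ys) '' X)
  have hα : ∀ y ∈ Y, α ≤ g xs y := fun y hy =>
    csInf_le (hYcomp.bddBelow_image (hg.uncurry_left xs hxs)) (mem_image_of_mem _ hy)
  have hβ : ∀ x ∈ X, g x ys ≤ β := fun x hx =>
    le_csSup (hXcomp.bddAbove_image (hg.uncurry_right ys hys)) (mem_image_of_mem _ hx)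
  obtain ⟨x', hx', y', hy', -, -, hdev₁, hdev₂⟩ :=
    hfeas α (-β) ⟨xs, hxs, ys, hys, hα ys hys, neg_le_neg (hβ xs hxs)⟩
  have hβ_le : β ≤ g x' y' := by
    obtain ⟨x₁, hx₁, hx₁v, -⟩ :=
      hXcomp.exists_sSup_image_eq_and_ge hXne (hg.uncurry_right y' hy')
    exact hX.le_apply_of_forall_lt_apply_imp_lt (hg.uncurry_right y' hy') hx' hx₁
      (hx₁v ▸ hys_min hy') fun x hx hlt => neg_lt_neg_iff.1 (hdev₁ x hx hlt)
  have hle_α : g x' y' ≤ α := by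
    obtain ⟨y₁, hy₁, hy₁v, -⟩ := hYcomp.exists_sInf_image_eq_and_le hYne (hg.uncurry_left x' hx')
    exact neg_le_neg_iff.1 <| hY.le_apply_of_forall_lt_apply_imp_lt (f := fun y => -g x' y)
      (hg.uncurry_left x' hx').neg hy' hy₁ (neg_le_neg (hy₁v ▸ hxs_max hx'))
      fun y hy hlt => neg_lt_neg (hdev₂ y hy hlt)
  exact ⟨xs, hxs, ys, hys, fun x hx => (hβ x hx).trans (hβ_le.trans (hle_α.trans (hα ys hys))),
    fun y hy => (hβ xs hxs).trans (hβ_le.trans (hle_α.trans (hα y hy)))⟩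

end ZeroSum

theorem zero_sum_feasible_iff_saddle_general
    {E F : Type*}
    [AddCommGroup E] [Module ℝ E] [TopologicalSpace E]
    [IsTopologicalAddGroup E] [ContinuousSMul ℝ E]
    [AddCommGroup F] [Module ℝ F] [TopologicalSpace F]
    [IsTopologicalAddGroup F] [ContinuousSMul ℝ F]
    (X : Set E) (Y : Set F) (hXne : X.Nonempty) (hYne : Y.Nonempty)
    (hXcomp : IsCompact X) (hYcomp : IsCompact Y)
    (hXconv : Convex ℝ X) (hYconv : Convex ℝ Y)
    (g : E → F → ℝ)
    (hg : ContinuousOn (fun p : E × F => g p.1 p.2) (X ×ˢ Y)) :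
    FeasibleOn X Y g (fun x y => -g x y) ↔
      ∃ xs ∈ X, ∃ ys ∈ Y,
        (∀ x ∈ X, g x ys ≤ g xs ys) ∧ (∀ y ∈ Y, g xs ys ≤ g xs y) :=
  ⟨exists_isSaddle_of_feasibleOn hXconv.isPreconnected hYconv.isPreconnected hXcomp hYcomp hXne
      hYne hg,
    fun ⟨_, hxs, _, hys, hxs_best, hys_best⟩ =>
      feasibleOn_of_isSaddle hXconv.isPreconnected hYconv.isPreconnected hXcomp hYcomp hXne hYne
        hg hxs hys hxs_best hys_best⟩

/-- A zero-sum game over nonempty compact convex subsets of Hausdorff real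
topological vector spaces, with continuous payoff, is feasible if and only if it
has a saddle point (its value exists and is achieved by optimal strategies). -/
theorem zero_sum_feasible_iff_saddle
    {E F : Type*}
    [AddCommGroup E] [Module ℝ E] [TopologicalSpace E]
    [IsTopologicalAddGroup E] [ContinuousSMul ℝ E] [T2Space E]
    [AddCommGroup F] [Module ℝ F] [TopologicalSpace F]
    [IsTopologicalAddGroup F] [ContinuousSMul ℝ F] [T2Space F]
    (X : Set E) (Y : Set F) (hXne : X.Nonempty) (hYne : Y.Nonempty)
    (hXcomp : IsCompact X) (hYcomp : IsCompact Y)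
    (hXconv : Convex ℝ X) (hYconv : Convex ℝ Y)
    (g : E → F → ℝ)
    (hg : ContinuousOn (fun p : E × F => g p.1 p.2) (X ×ˢ Y)) :
    FeasibleOn X Y g (fun x y => -g x y) ↔
      ∃ xs ∈ X, ∃ ys ∈ Y,
        (∀ x ∈ X, g x ys ≤ g xs ys) ∧ (∀ y ∈ Y, g xs ys ≤ g xs y) :=
  zero_sum_feasible_iff_saddle_general X Y hXne hYne hXcomp hYcomp hXconv hYconv g hg
end

section
/- Let X and Y be nonempty compact convex subsets of Hausdorff real topological vector spaces, let G=(X,Y,U,V) be a two-player game with U, V continuous, and let φ, ψ : ℝ→ℝ be strictly increasing continuous bijections such that ψ(V(x,y)) = -φ(U(x,y)) for all (x,y) ∈ X×Y, and such that the zero-sum game (X,Y,φ∘U) has a saddle point with value w. Then for every pair of outside options (u0,v0) ∈ ℝ² admitting a (u0,v0)-feasible contract, there exists a (u0,v0)-constrained Nash equilibrium (x*,y*) of G with U(x*,y*) = median(u0, φ⁻¹(-ψ(v0)), φ⁻¹(w)) and V(x*,y*) = median(ψ⁻¹(-φ(u0)), v0, ψ⁻¹(-w)). In particular, G is feasible.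 -/
/-- The median of three real numbers. -/
noncomputable def median3 (a b c : ℝ) : ℝ := max (min a b) (min (max a b) c)

open Function Set

def IsConstrainedNashEquilibrium {α β : Type*} (X : Set α) (Y : Set β) (U V : α → β → ℝ)
    (u₀ v₀ : ℝ) (x : α) (y : β) : Prop :=
  u₀ ≤ U x y ∧ v₀ ≤ V x y ∧ (∀ x' ∈ X, U x y < U x' y → V x' y < v₀) ∧
    ∀ y' ∈ Y, V x y < V x y' → U x y' < u₀

theorem isConstrainedNashEquilibrium_of_strictAnti {α β : Type*} {X : Set α} {Y : Set β}
    {U V : α → β → ℝ} {g : ℝ → ℝ} (hg : StrictAnti g)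
    (hVU : ∀ x ∈ X, ∀ y ∈ Y, V x y = g (U x y)) {x : α} {y : β} (hx : x ∈ X) (hy : y ∈ Y)
    {lo hi : ℝ} (hlo : lo ≤ U x y) (hhi : U x y ≤ hi)
    (hdevx : ∀ x' ∈ X, U x y < U x' y → hi < U x' y)
    (hdevy : ∀ y' ∈ Y, U x y' < U x y → U x y' < lo) :
    IsConstrainedNashEquilibrium X Y U V lo (g hi) x y := by
  refine ⟨hlo, hVU x hx y hy ▸ hg.antitone hhi, fun x' hx' hlt => ?_, fun y' hy' hlt => ?_⟩
  · rw [hVU x' hx' y hy]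
    exact hg (hdevx x' hx' hlt)
  · rw [hVU x hx y hy, hVU x hx y' hy', hg.lt_iff_gt] at hlt
    exact hdevy y' hy' hlt

theorem StrictMono.strictMono_invFun {φ : ℝ → ℝ} (hφ : StrictMono φ) (hs : Surjective φ) :
    StrictMono (invFun φ) := fun a b hab =>
  hφ.lt_iff_lt.mp (by rwa [rightInverse_invFun hs a, rightInverse_invFun hs b])

section Median

theorem median3_eq_max_min {a b : ℝ} (hab : a ≤ b) (c : ℝ) :
    median3 a b c = max a (min b c) := by
  rw [median3, min_eq_left hab, max_eq_right hab]

theorem median3_mem_Icc {a b : ℝ} (hab : a ≤ b) (c : ℝ) : median3 a b c ∈ Icc a b := by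
  rw [median3_eq_max_min hab]
  exact ⟨le_max_left _ _, max_le hab (min_le_left _ _)⟩

theorem median3_eq_min_max (a b c : ℝ) : median3 a b c = min (max a b) (max (min a b) c) := by
  rw [median3, max_min_distrib_left, max_eq_right min_le_max]

theorem Antitone.map_median3 {g : ℝ → ℝ} (hg : Antitone g) (a b c : ℝ) :
    g (median3 a b c) = median3 (g a) (g b) (g c) := by
  rw [median3, hg.map_max, hg.map_min, hg.map_min, hg.map_max, median3_eq_min_max]

end Median

section

variable {α β : Type*} [TopologicalSpace α] [TopologicalSpace β] {X : Set α} {Y : Set β}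
  {f : α → β → ℝ} {c : ℝ}

/-- Intermediate value theorem for the upper envelope `y ↦ max_{x ∈ X} f x y`. -/
theorem IsPreconnected.exists_maxOn_eq (hY : IsPreconnected Y) (hX : IsCompact X)
    (hf : ContinuousOn (fun p : α × β => f p.1 p.2) (X ×ˢ Y)) {y₀ y₁ : β} (hy₀ : y₀ ∈ Y)
    (hy₁ : y₁ ∈ Y) (h₀ : ∀ x ∈ X, f x y₀ ≤ c) (h₁ : ∃ x ∈ X, c ≤ f x y₁) :
    ∃ y ∈ Y, ∃ x ∈ X, f x y = c ∧ ∀ x' ∈ X, f x' y ≤ c := by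
  obtain ⟨x₁, hx₁, hc⟩ := h₁
  have : CompactSpace X := isCompact_iff_compactSpace.mp hX
  have : Nonempty X := ⟨⟨x₁, hx₁⟩⟩
  have : PreconnectedSpace Y := Subtype.preconnectedSpace hY
  let F : Y → X → ℝ := fun y x => f x y
  have hF : Continuous (uncurry F) :=
    hf.comp_continuous ((continuous_subtype_val.comp continuous_snd).prodMk
      (continuous_subtype_val.comp continuous_fst)) fun p => ⟨p.2.2, p.1.2⟩
  have hmax : ∀ y : Y, ∃ x : X, F y x = sSup (F y '' univ) ∧ ∀ x', F y x' ≤ F y x := by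
    intro y
    obtain ⟨x, -, hsup, hle⟩ := isCompact_univ.exists_sSup_image_eq_and_ge
      univ_nonempty (hF.comp (.prodMk_right y)).continuousOn
    exact ⟨x, hsup.symm, fun x' => hle x' (mem_univ _)⟩
  have hIcc : c ∈ Icc (sSup (F ⟨y₀, hy₀⟩ '' univ)) (sSup (F ⟨y₁, hy₁⟩ '' univ)) := by
    obtain ⟨x, hx, hle⟩ := hmax ⟨y₀, hy₀⟩
    obtain ⟨x', hx', hle'⟩ := hmax ⟨y₁, hy₁⟩
    exact ⟨hx ▸ h₀ x x.2, hc.trans (hx' ▸ hle' ⟨x₁, hx₁⟩)⟩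
  obtain ⟨y, hy⟩ := intermediate_value_univ _ _ (isCompact_univ.continuous_sSup hF) hIcc
  obtain ⟨x, hx, hle⟩ := hmax y
  exact ⟨y, y.2, x, x.2, hx.trans hy, fun x' hx' => hx.trans hy ▸ hle ⟨x', hx'⟩⟩

theorem IsPreconnected.exists_minOn_eq (hX : IsPreconnected X) (hY : IsCompact Y)
    (hf : ContinuousOn (fun p : α × β => f p.1 p.2) (X ×ˢ Y)) {x₀ x₁ : α} (hx₀ : x₀ ∈ X)
    (hx₁ : x₁ ∈ X) (h₀ : ∀ y ∈ Y, c ≤ f x₀ y) (h₁ : ∃ y ∈ Y, f x₁ y ≤ c) :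
    ∃ x ∈ X, ∃ y ∈ Y, f x y = c ∧ ∀ y' ∈ Y, c ≤ f x y' := by
  have hg : ContinuousOn (fun p : β × α => -f p.2 p.1) (Y ×ˢ X) :=
    (hf.comp continuous_swap.continuousOn fun p hp => ⟨hp.2, hp.1⟩).neg
  obtain ⟨x, hx, y, hy, hxy, hle⟩ :=
    hX.exists_maxOn_eq (f := fun y x => -f x y) hY hg (c := -c) hx₀ hx₁
    (fun y hy => neg_le_neg (h₀ y hy)) (h₁.imp fun y ⟨hy, hle⟩ => ⟨hy, neg_le_neg hle⟩)
  exact ⟨x, hx, y, hy, neg_inj.mp hxy, fun y' hy' => neg_le_neg_iff.mp (hle y' hy')⟩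

theorem exists_constrained_saddle_point (hXc : IsCompact X) (hXp : IsPreconnected X)
    (hYc : IsCompact Y) (hYp : IsPreconnected Y)
    (hf : ContinuousOn (fun p : α × β => f p.1 p.2) (X ×ˢ Y)) {x₀ : α} {y₀ : β} (hx₀ : x₀ ∈ X)
    (hy₀ : y₀ ∈ Y) (hmax : ∀ x ∈ X, f x y₀ ≤ f x₀ y₀) (hmin : ∀ y ∈ Y, f x₀ y₀ ≤ f x₀ y)
    {lo hi : ℝ} (hfeas : ∃ x ∈ X, ∃ y ∈ Y, lo ≤ f x y ∧ f x y ≤ hi) :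
    ∃ x ∈ X, ∃ y ∈ Y, f x y = median3 lo hi (f x₀ y₀) ∧
      (∀ x' ∈ X, f x y < f x' y → hi < f x' y) ∧ ∀ y' ∈ Y, f x y' < f x y → f x y' < lo := by
  obtain ⟨x₁, hx₁, y₁, hy₁, hlo, hhi⟩ := hfeas
  rw [median3_eq_max_min (hlo.trans hhi)]
  rcases lt_or_ge (f x₀ y₀) lo with hv | hlov
  · obtain ⟨y, hy, x, hx, hxy, hle⟩ := hYp.exists_maxOn_eq hXc hf hy₀ hy₁
      (fun x hx => (hmax x hx).trans hv.le) ⟨x₁, hx₁, hlo⟩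
    refine ⟨x, hx, y, hy, ?_, fun x' hx' hlt => absurd (hle x' hx') (hxy ▸ hlt).not_ge,
      fun y' _ hlt => hxy ▸ hlt⟩
    rw [hxy, max_eq_left ((min_le_right _ _).trans hv.le)]
  rcases lt_or_ge hi (f x₀ y₀) with hv | hvhi
  · obtain ⟨x, hx, y, hy, hxy, hle⟩ := hXp.exists_minOn_eq hYc hf hx₀ hx₁
      (fun y hy => hv.le.trans (hmin y hy)) ⟨y₁, hy₁, hhi⟩
    refine ⟨x, hx, y, hy, ?_, fun x' _ hlt => hxy ▸ hlt,
      fun y' hy' hlt => absurd (hle y' hy') (hxy ▸ hlt).not_ge⟩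
    rw [hxy, min_eq_left hv.le, max_eq_right (hlo.trans hhi)]
  · refine ⟨x₀, hx₀, y₀, hy₀, by rw [min_eq_right hvhi, max_eq_right hlov],
      fun x' hx' hlt => absurd (hmax x' hx') hlt.not_ge,
      fun y' hy' hlt => absurd (hmin y' hy') hlt.not_ge⟩

theorem exists_isConstrainedNashEquilibrium_of_strictAnti (hXc : IsCompact X)
    (hXp : IsPreconnected X) (hYc : IsCompact Y) (hYp : IsPreconnected Y) {U V : α → β → ℝ}
    (hU : ContinuousOn (fun p : α × β => U p.1 p.2) (X ×ˢ Y)) {g : ℝ → ℝ} (hg : StrictAnti g)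
    (hVU : ∀ x ∈ X, ∀ y ∈ Y, V x y = g (U x y)) {x₀ : α} {y₀ : β} (hx₀ : x₀ ∈ X)
    (hy₀ : y₀ ∈ Y) (hmax : ∀ x ∈ X, U x y₀ ≤ U x₀ y₀) (hmin : ∀ y ∈ Y, U x₀ y₀ ≤ U x₀ y)
    {lo hi : ℝ} (hfeas : ∃ x ∈ X, ∃ y ∈ Y, lo ≤ U x y ∧ g hi ≤ V x y) :
    ∃ x ∈ X, ∃ y ∈ Y, IsConstrainedNashEquilibrium X Y U V lo (g hi) x y ∧
      U x y = median3 lo hi (U x₀ y₀) ∧ V x y = median3 (g lo) (g hi) (g (U x₀ y₀)) := by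
  obtain ⟨x₁, hx₁, y₁, hy₁, hlo₁, hhi₁⟩ := hfeas
  rw [hVU x₁ hx₁ y₁ hy₁, hg.le_iff_ge] at hhi₁
  obtain ⟨x, hx, y, hy, hval, hdevx, hdevy⟩ := exists_constrained_saddle_point hXc hXp hYc hYp
    hU hx₀ hy₀ hmax hmin ⟨x₁, hx₁, y₁, hy₁, hlo₁, hhi₁⟩
  obtain ⟨hlo, hhi⟩ := hval ▸ median3_mem_Icc (hlo₁.trans hhi₁) (U x₀ y₀)
  refine ⟨x, hx, y, hy,
    isConstrainedNashEquilibrium_of_strictAnti hg hVU hx hy hlo hhi hdevx hdevy, hval, ?_⟩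
  rw [hVU x hx y hy, hval, hg.antitone.map_median3]

end

theorem strictly_competitive_constrained_equilibrium_general
    {E F : Type*}
    [AddCommGroup E] [Module ℝ E] [TopologicalSpace E]
    [IsTopologicalAddGroup E] [ContinuousSMul ℝ E]
    [AddCommGroup F] [Module ℝ F] [TopologicalSpace F]
    [IsTopologicalAddGroup F] [ContinuousSMul ℝ F]
    (X : Set E) (Y : Set F)
    (hXcomp : IsCompact X) (hYcomp : IsCompact Y)
    (hXconv : Convex ℝ X) (hYconv : Convex ℝ Y)
    (U V : E → F → ℝ)
    (hUc : ContinuousOn (fun p : E × F => U p.1 p.2) (X ×ˢ Y))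
    (φ ψ : ℝ → ℝ)
    (hφmono : StrictMono φ) (hψmono : StrictMono ψ)
    (hφbij : Function.Bijective φ) (hψbij : Function.Bijective ψ)
    (hcomp : ∀ x ∈ X, ∀ y ∈ Y, ψ (V x y) = -φ (U x y))
    (xs : E) (ys : F) (hxs : xs ∈ X) (hys : ys ∈ Y)
    (hsaddle : (∀ x ∈ X, φ (U x ys) ≤ φ (U xs ys)) ∧
               (∀ y ∈ Y, φ (U xs ys) ≤ φ (U xs y)))
    (w : ℝ) (hw : φ (U xs ys) = w) :
    (∀ u0 v0 : ℝ, (∃ x ∈ X, ∃ y ∈ Y, u0 ≤ U x y ∧ v0 ≤ V x y) →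
      ∃ xstar ∈ X, ∃ ystar ∈ Y,
        u0 ≤ U xstar ystar ∧ v0 ≤ V xstar ystar ∧
        (∀ x ∈ X, U xstar ystar < U x ystar → V x ystar < v0) ∧
        (∀ y ∈ Y, V xstar ystar < V xstar y → U xstar y < u0) ∧
        U xstar ystar = median3 u0 (Function.invFun φ (-ψ v0)) (Function.invFun φ w) ∧
        V xstar ystar = median3 (Function.invFun ψ (-φ u0)) v0 (Function.invFun ψ (-w))) ∧
    FeasibleOn X Y U V := by
  set g : ℝ → ℝ := fun u => invFun ψ (-φ u) with hg_def
  have hg : StrictAnti g := fun a b hab =>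
    hψmono.strictMono_invFun hψbij.2 (neg_lt_neg (hφmono hab))
  have hVU : ∀ x ∈ X, ∀ y ∈ Y, V x y = g (U x y) := fun x hx y hy => by
    rw [← leftInverse_invFun hψbij.1 (V x y), hcomp x hx y hy]
  have hgφ : ∀ v, g (invFun φ (-ψ v)) = v := fun v => by
    simp only [hg_def, rightInverse_invFun hφbij.2 _, neg_neg, leftInverse_invFun hψbij.1 _]
  have key : ∀ u0 v0 : ℝ, (∃ x ∈ X, ∃ y ∈ Y, u0 ≤ U x y ∧ v0 ≤ V x y) →
      ∃ x ∈ X, ∃ y ∈ Y, IsConstrainedNashEquilibrium X Y U V u0 v0 x y ∧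
        U x y = median3 u0 (invFun φ (-ψ v0)) (invFun φ w) ∧
        V x y = median3 (invFun ψ (-φ u0)) v0 (invFun ψ (-w)) := by
    intro u0 v0 hfeas
    have hex := exists_isConstrainedNashEquilibrium_of_strictAnti hXcomp hXconv.isPreconnected
      hYcomp hYconv.isPreconnected hUc hg hVU hxs hys
      (fun x hx => hφmono.le_iff_le.mp (hsaddle.1 x hx))
      (fun y hy => hφmono.le_iff_le.mp (hsaddle.2 y hy)) (by rwa [hgφ])
    rw [← hw, leftInverse_invFun hφbij.1]
    rwa [hgφ] at hex
  refine ⟨fun u0 v0 h => ?_, fun u0 v0 h => ?_⟩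
  · obtain ⟨x, hx, y, hy, ⟨h1, h2, h3, h4⟩, h5, h6⟩ := key u0 v0 h
    exact ⟨x, hx, y, hy, h1, h2, h3, h4, h5, h6⟩
  · obtain ⟨x, hx, y, hy, hne, -⟩ := key u0 v0 h
    exact ⟨x, hx, y, hy, hne⟩

/-- A strictly competitive game obtained from a zero-sum game with value `w` by
strictly increasing continuous transformations `φ, ψ` admits, for every pair of
outside options with a feasible contract, a constrained Nash equilibrium with
payoffs given by the corresponding medians; in particular, it is feasible. -/
theorem strictly_competitive_constrained_equilibrium
    {E F : Type*}
    [AddCommGroup E] [Module ℝ E] [TopologicalSpace E]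
    [IsTopologicalAddGroup E] [ContinuousSMul ℝ E] [T2Space E]
    [AddCommGroup F] [Module ℝ F] [TopologicalSpace F]
    [IsTopologicalAddGroup F] [ContinuousSMul ℝ F] [T2Space F]
    (X : Set E) (Y : Set F) (hXne : X.Nonempty) (hYne : Y.Nonempty)
    (hXcomp : IsCompact X) (hYcomp : IsCompact Y)
    (hXconv : Convex ℝ X) (hYconv : Convex ℝ Y)
    (U V : E → F → ℝ)
    (hUc : ContinuousOn (fun p : E × F => U p.1 p.2) (X ×ˢ Y))
    (hVc : ContinuousOn (fun p : E × F => V p.1 p.2) (X ×ˢ Y))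
    (φ ψ : ℝ → ℝ)
    (hφmono : StrictMono φ) (hψmono : StrictMono ψ)
    (hφcont : Continuous φ) (hψcont : Continuous ψ)
    (hφbij : Function.Bijective φ) (hψbij : Function.Bijective ψ)
    (hcomp : ∀ x ∈ X, ∀ y ∈ Y, ψ (V x y) = -φ (U x y))
    (xs : E) (ys : F) (hxs : xs ∈ X) (hys : ys ∈ Y)
    (hsaddle : (∀ x ∈ X, φ (U x ys) ≤ φ (U xs ys)) ∧
               (∀ y ∈ Y, φ (U xs ys) ≤ φ (U xs y)))
    (w : ℝ) (hw : φ (U xs ys) = w) :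
    (∀ u0 v0 : ℝ, (∃ x ∈ X, ∃ y ∈ Y, u0 ≤ U x y ∧ v0 ≤ V x y) →
      ∃ xstar ∈ X, ∃ ystar ∈ Y,
        u0 ≤ U xstar ystar ∧ v0 ≤ V xstar ystar ∧
        (∀ x ∈ X, U xstar ystar < U x ystar → V x ystar < v0) ∧
        (∀ y ∈ Y, V xstar ystar < V xstar y → U xstar y < u0) ∧
        U xstar ystar = median3 u0 (Function.invFun φ (-ψ v0)) (Function.invFun φ w) ∧
        V xstar ystar = median3 (Function.invFun ψ (-φ u0)) v0 (Function.invFun ψ (-w))) ∧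
    FeasibleOn X Y U V :=
  strictly_competitive_constrained_equilibrium_general X Y hXcomp hYcomp hXconv hYconv U V hUc φ ψ
    hφmono hψmono hφbij hψbij hcomp xs ys hxs hys hsaddle w hw
end

section
/- Let G=(X,Y,U,V) be a two-player game with X and Y nonempty compact topological spaces, U and V continuous, and suppose G admits a continuous ordinal potential φ : X×Y→ℝ. Then G is feasible. -/
/-- A two-player game over (whole) strategy types `X`, `Y` with payoffs `U, V` is
feasible: for every pair of outside options admitting a feasible contract, there
exists a constrained Nash equilibrium. -/
def FeasibleGame {X Y : Type*} (U V : X → Y → ℝ) : Prop :=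
  ∀ u0 v0 : ℝ, (∃ x y, u0 ≤ U x y ∧ v0 ≤ V x y) →
    ∃ x' y', u0 ≤ U x' y' ∧ v0 ≤ V x' y' ∧
      (∀ x, U x' y' < U x y' → V x y' < v0) ∧
      (∀ y, V x' y' < V x' y → U x' y < u0)

/-- A compact-continuous two-player game admitting a continuous ordinal potential
is feasible. -/
theorem ordinal_potential_game_feasible
    {X Y : Type*}
    [TopologicalSpace X] [CompactSpace X] [Nonempty X]
    [TopologicalSpace Y] [CompactSpace Y] [Nonempty Y]
    (U V : X → Y → ℝ)
    (hU : Continuous fun p : X × Y => U p.1 p.2)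
    (hV : Continuous fun p : X × Y => V p.1 p.2)
    (φ : X → Y → ℝ)
    (hφ : Continuous fun p : X × Y => φ p.1 p.2)
    (hpot1 : ∀ x x' y, U x y < U x' y ↔ φ x y < φ x' y)
    (hpot2 : ∀ x y y', V x y < V x y' ↔ φ x y < φ x y') :
    FeasibleGame U V := by
  intro u0 v0 ⟨x0, y0, hx0, hy0⟩
  set S : Set (X × Y) := {p | u0 ≤ U p.1 p.2 ∧ v0 ≤ V p.1 p.2} with hS
  have hSc : IsClosed S :=
    (isClosed_le continuous_const hU).inter (isClosed_le continuous_const hV)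
  have hScomp : IsCompact S := hSc.isCompact
  have hSne : S.Nonempty := ⟨(x0, y0), hx0, hy0⟩
  obtain ⟨⟨x', y'⟩, hmem, hmax⟩ :=
    hScomp.exists_isMaxOn hSne (hφ.continuousOn)
  refine ⟨x', y', hmem.1, hmem.2, ?_, ?_⟩
  · intro x hx
    by_contra h
    push_neg at h
    have hin : (x, y') ∈ S := ⟨le_trans hmem.1 hx.le, h⟩
    have := hmax hin
    exact absurd ((hpot1 x' x y').mp hx) (not_lt.mpr this)
  · intro y hy
    by_contra h
    push_neg at h
    have hin : (x', y) ∈ S := ⟨h, le_trans hmem.2 hy.le⟩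
    have := hmax hin
    exact absurd ((hpot2 x' y' y).mp hy) (not_lt.mpr this)
end

section
/- Let G=(X,Y,U,V) be a two-player game with X and Y nonempty convex subsets of real topological vector spaces, U and V continuous, U(·,y) q-concave for every y ∈ Y, and V(x,·) q-concave for every x ∈ X. If (x',y') is a (u0,v0)-constrained Nash equilibrium of G that is not a Nash equilibrium of G, then U(x',y') = u0 or V(x',y') = v0. -/
/-!
If, say, player 1 has a strictly improving deviation `x` against `y'`, q-concavity makes every
point strictly between `x'` and `x` an improvement as well, so the constrained-equilibrium
condition gives `V < v0` along that open segment. Letting the point tend to `x'`, continuity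
yields `V x' y' ≤ v0`, and feasibility turns this into equality.
-/

/-- `f` is q-concave on the convex set `C`: whenever `f s ≥ c` and `f s' > c`,
all strict convex combinations of `s` and `s'` have value `> c`. -/
def QConcaveOn {E : Type*} [AddCommGroup E] [Module ℝ E] (C : Set E) (f : E → ℝ) : Prop :=
  ∀ s ∈ C, ∀ s' ∈ C, ∀ c : ℝ, c ≤ f s → c < f s' →
    ∀ t : ℝ, 0 < t → t < 1 → c < f ((1 - t) • s + t • s')

section

variable {E : Type*} [AddCommGroup E] [Module ℝ E] {C : Set E} {f g : E → ℝ}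

theorem QConcaveOn.lt_of_mem_openSegment (hf : QConcaveOn C f) {s s' z : E} (hs : s ∈ C)
    (hs' : s' ∈ C) (hlt : f s < f s') (hz : z ∈ openSegment ℝ s s') : f s < f z := by
  obtain ⟨a, t, ha, ht, hat, rfl⟩ := hz
  obtain rfl : a = 1 - t := by linarith
  exact hf s hs s' hs' (f s) le_rfl hlt t ht (by linarith)

variable [TopologicalSpace E] [ContinuousAdd E] [ContinuousSMul ℝ E]

theorem ContinuousOn.le_of_forall_openSegment_le (hC : Convex ℝ C) (hg : ContinuousOn g C)
    {s s' : E} (hs : s ∈ C) (hs' : s' ∈ C) {c : ℝ} (h : ∀ z ∈ openSegment ℝ s s', g z ≤ c) :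
    g s ≤ c :=
  ContinuousWithinAt.closure_le (segment_subset_closure_openSegment (left_mem_segment ℝ s s'))
    ((hg s hs).mono (hC.openSegment_subset hs hs')) continuousWithinAt_const h

theorem QConcaveOn.le_of_forall_improvement_lt (hC : Convex ℝ C) (hf : QConcaveOn C f)
    (hg : ContinuousOn g C) {s s' : E} (hs : s ∈ C) (hs' : s' ∈ C) (hlt : f s < f s') {c : ℝ}
    (himp : ∀ z ∈ C, f s < f z → g z < c) : g s ≤ c :=
  hg.le_of_forall_openSegment_le hC hs hs' fun z hz =>
    (himp z (hC.openSegment_subset hs hs' hz) (hf.lt_of_mem_openSegment hs hs' hlt hz)).le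

end

theorem qconcave_constrained_equilibrium_payoff_general
    {E F : Type*}
    [AddCommGroup E] [Module ℝ E] [TopologicalSpace E]
    [IsTopologicalAddGroup E] [ContinuousSMul ℝ E]
    [AddCommGroup F] [Module ℝ F] [TopologicalSpace F]
    [IsTopologicalAddGroup F] [ContinuousSMul ℝ F]
    (X : Set E) (Y : Set F)
    (hXconv : Convex ℝ X) (hYconv : Convex ℝ Y)
    (U V : E → F → ℝ)
    (hUc : ContinuousOn (fun p : E × F => U p.1 p.2) (X ×ˢ Y))
    (hVc : ContinuousOn (fun p : E × F => V p.1 p.2) (X ×ˢ Y))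
    (hUq : ∀ y ∈ Y, QConcaveOn X fun x => U x y)
    (hVq : ∀ x ∈ X, QConcaveOn Y fun y => V x y)
    (u0 v0 : ℝ) (x' : E) (y' : F) (hx' : x' ∈ X) (hy' : y' ∈ Y)
    (hfeas : u0 ≤ U x' y' ∧ v0 ≤ V x' y')
    (hcne1 : ∀ x ∈ X, U x' y' < U x y' → V x y' < v0)
    (hcne2 : ∀ y ∈ Y, V x' y' < V x' y → U x' y < u0)
    (hnotNash : ¬ ((∀ x ∈ X, U x y' ≤ U x' y') ∧ (∀ y ∈ Y, V x' y ≤ V x' y'))) :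
    U x' y' = u0 ∨ V x' y' = v0 := by
  simp only [not_and_or, not_forall, not_le, exists_prop] at hnotNash
  rcases hnotNash with ⟨x, hx, hlt⟩ | ⟨y, hy, hlt⟩
  · refine Or.inr (le_antisymm ?_ hfeas.2)
    exact (hUq y' hy').le_of_forall_improvement_lt hXconv (hVc.uncurry_right y' hy') hx' hx hlt
      hcne1
  · refine Or.inl (le_antisymm ?_ hfeas.1)
    exact (hVq x' hx').le_of_forall_improvement_lt hYconv (hUc.uncurry_left x' hx') hy' hy hlt
      hcne2

/-- In a q-concave continuous game, a constrained Nash equilibrium that is not a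
Nash equilibrium gives at least one of the players exactly his/her outside option. -/
theorem qconcave_constrained_equilibrium_payoff
    {E F : Type*}
    [AddCommGroup E] [Module ℝ E] [TopologicalSpace E]
    [IsTopologicalAddGroup E] [ContinuousSMul ℝ E]
    [AddCommGroup F] [Module ℝ F] [TopologicalSpace F]
    [IsTopologicalAddGroup F] [ContinuousSMul ℝ F]
    (X : Set E) (Y : Set F) (hXne : X.Nonempty) (hYne : Y.Nonempty)
    (hXconv : Convex ℝ X) (hYconv : Convex ℝ Y)
    (U V : E → F → ℝ)
    (hUc : ContinuousOn (fun p : E × F => U p.1 p.2) (X ×ˢ Y))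
    (hVc : ContinuousOn (fun p : E × F => V p.1 p.2) (X ×ˢ Y))
    (hUq : ∀ y ∈ Y, QConcaveOn X fun x => U x y)
    (hVq : ∀ x ∈ X, QConcaveOn Y fun y => V x y)
    (u0 v0 : ℝ) (x' : E) (y' : F) (hx' : x' ∈ X) (hy' : y' ∈ Y)
    (hfeas : u0 ≤ U x' y' ∧ v0 ≤ V x' y')
    (hcne1 : ∀ x ∈ X, U x' y' < U x y' → V x y' < v0)
    (hcne2 : ∀ y ∈ Y, V x' y' < V x' y → U x' y < u0)
    (hnotNash : ¬ ((∀ x ∈ X, U x y' ≤ U x' y') ∧ (∀ y ∈ Y, V x' y ≤ V x' y'))) :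
    U x' y' = u0 ∨ V x' y' = v0 :=
  qconcave_constrained_equilibrium_payoff_general X Y hXconv hYconv U V hUc hVc hUq hVq u0 v0 x' y'
    hx' hy' hfeas hcne1 hcne2 hnotNash
end

section
/- Consider the 3×3 bimatrix game with pure payoffs u, v : Fin 3 × Fin 3 → ℝ given (rows indexing player 1) by u = [[2,-10,3],[3,2,-10],[-10,3,2]] and v = [[1,-10,0],[0,1,-10],[-10,0,1]], and its mixed extension G on X = Y = stdSimplex ℝ (Fin 3) with U(p,q) = Σ_{a,b} p_a q_b u(a,b) and V(p,q) = Σ_{a,b} p_a q_b v(a,b). Then there exists a (0,0)-feasible contract (for instance both players putting all mass on their second pure strategy yields payoffs (2,1)), but there exists no (0,0)-constrained Nash equilibrium. In particular, G is not feasible. -/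
/-- Payoff of player 1 in the mixed extension of Solan's 3×3 game. -/
noncomputable def solanU (p q : Fin 3 → ℝ) : ℝ :=
  ∑ a : Fin 3, ∑ b : Fin 3, p a * q b * (!![(2:ℝ), -10, 3; 3, 2, -10; -10, 3, 2] a b)

/-- Payoff of player 2 in the mixed extension of Solan's 3×3 game. -/
noncomputable def solanV (p q : Fin 3 → ℝ) : ℝ :=
  ∑ a : Fin 3, ∑ b : Fin 3, p a * q b * (!![(1:ℝ), -10, 0; 0, 1, -10; -10, 0, 1] a b)

/-!
Entrywise `u ≥ v`, so any deviation raising player 2's payoff above her current, nonnegative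
one keeps player 1 above his outside option `0`. Hence in a `(0,0)`-constrained equilibrium
`(p, q)` player 2 best responds, and `q` is supported on the columns `b` maximising
`p b - 10 p (b - 1)`. These three column payoffs sum to `-9 < 0`, so the support of `q` is a
proper subset of the cyclic group `Fin 3` and contains some `b` with `q (b - 1) = 0`. Player 1's
switch to the pure row `b + 1` leaves player 2 with `q (b + 1) ≥ 0`, so it must be unprofitable;
but because column `b + 1` is no better for player 2 than column `b`, it is profitable.
-/

open Finset

def IsConstrainedNashOn {E F : Type*} (X : Set E) (Y : Set F) (U V : E → F → ℝ) (u0 v0 : ℝ)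
    (x : E) (y : F) : Prop :=
  u0 ≤ U x y ∧ v0 ≤ V x y ∧
    (∀ x' ∈ X, U x y < U x' y → V x' y < v0) ∧
    (∀ y' ∈ Y, V x y < V x y' → U x y' < u0)

namespace IsConstrainedNashOn

variable {E F : Type*} {X : Set E} {Y : Set F} {U V : E → F → ℝ} {u0 v0 : ℝ} {x : E} {y : F}

lemma le_of_safe (h : IsConstrainedNashOn X Y U V u0 v0 x y) {x' : E} (hx' : x' ∈ X)
    (hv : v0 ≤ V x' y) : U x' y ≤ U x y :=
  le_of_not_gt fun hlt => (h.2.2.1 x' hx' hlt).not_ge hv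

lemma isMaxOn_right (h : IsConstrainedNashOn X Y U V u0 v0 x y)
    (hdom : ∀ y' ∈ Y, V x y' - v0 ≤ U x y' - u0) : IsMaxOn (V x) Y y := fun y' hy' =>
  le_of_not_gt fun hlt => by linarith [h.2.2.2 y' hy' hlt, hdom y' hy', h.2.1]

end IsConstrainedNashOn

open Fin.NatCast in
lemma Fin.exists_and_not_sub_one {n : ℕ} [NeZero n] {P : Fin n → Prop} {i j : Fin n}
    (hi : P i) (hj : ¬ P j) : ∃ b, P b ∧ ¬ P (b - 1) := by
  by_contra! h
  have hP : ∀ k : ℕ, P (i - (k : Fin n)) := by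
    intro k
    induction k with
    | zero => simpa using hi
    | succ k ih => simpa [sub_sub] using h _ ih
  exact hj (by simpa using hP (i - j).val)

lemma Fin.sum_univ_three_around {M : Type*} [AddCommMonoid M] (f : Fin 3 → M) (b : Fin 3) :
    ∑ a, f a = f (b - 1) + f b + f (b + 1) := by
  fin_cases b <;> simp [Fin.sum_univ_three] <;> abel

lemma Fin.add_one_add_one_eq_sub_one (b : Fin 3) : b + 1 + 1 = b - 1 := by
  fin_cases b <;> rfl

lemma Fin.sub_one_sub_one_eq_add_one (b : Fin 3) : b - 1 - 1 = b + 1 := by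
  fin_cases b <;> rfl

lemma stdSimplex.apply_eq_sum_mul_of_forall_le {ι : Type*} [Fintype ι] {q c : ι → ℝ}
    (hq : q ∈ stdSimplex ℝ ι) (hc : ∀ j, c j ≤ ∑ i, q i * c i) {i : ι} (hi : 0 < q i) :
    c i = ∑ j, q j * c j := by
  set S := ∑ j, q j * c j
  have hzero : ∑ j, q j * (S - c j) = 0 := by
    simp only [mul_sub, sum_sub_distrib, ← sum_mul, hq.2, one_mul, sub_self, S]
  have hterm := (sum_eq_zero_iff_of_nonneg fun j _ =>
    mul_nonneg (hq.1 j) (sub_nonneg.2 (hc j))).1 hzero i (mem_univ i)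
  linarith [(mul_eq_zero.1 hterm).resolve_left hi.ne']

lemma solanU_eq_sum (p q : Fin 3 → ℝ) :
    solanU p q = ∑ a, p a * (2 * q a - 10 * q (a + 1) + 3 * q (a - 1)) := by
  simp [solanU, Fin.sum_univ_three, show (-1 : Fin 3) = 2 from rfl]; ring

lemma solanV_eq_sum_left (p q : Fin 3 → ℝ) :
    solanV p q = ∑ a, p a * (q a - 10 * q (a + 1)) := by
  simp [solanV, Fin.sum_univ_three]; ring

lemma solanV_eq_sum_right (p q : Fin 3 → ℝ) :
    solanV p q = ∑ b, q b * (p b - 10 * p (b - 1)) := by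
  simp [solanV, Fin.sum_univ_three, show (-1 : Fin 3) = 2 from rfl]; ring

lemma solanV_le_solanU {p q : Fin 3 → ℝ} (hp : 0 ≤ p) (hq : 0 ≤ q) :
    solanV p q ≤ solanU p q := by
  unfold solanV solanU
  gcongr with a _ b _
  · exact mul_nonneg (hp a) (hq b)
  · fin_cases a <;> fin_cases b <;> norm_num

lemma solanV_single_right (p : Fin 3 → ℝ) (b : Fin 3) :
    solanV p (Pi.single b 1) = p b - 10 * p (b - 1) := by
  simp [solanV_eq_sum_right, Pi.single_apply]

lemma solanV_single_left (q : Fin 3 → ℝ) (a : Fin 3) :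
    solanV (Pi.single a 1) q = q a - 10 * q (a + 1) := by
  simp [solanV_eq_sum_left, Pi.single_apply]

lemma solanU_single_left (q : Fin 3 → ℝ) (a : Fin 3) :
    solanU (Pi.single a 1) q = 2 * q a - 10 * q (a + 1) + 3 * q (a - 1) := by
  simp [solanU_eq_sum, Pi.single_apply]

lemma solan_payoff_lt_deviation {x y z s t : ℝ} (hx : 0 ≤ x) (hxyz : x + y + z = 1) (hs : 0 < s)
    (ht : 0 ≤ t) (hcol : z - 10 * y ≤ y - 10 * x) :
    x * (3 * t - 10 * s) + y * (2 * s - 10 * t) + z * (2 * t + 3 * s) < 2 * t + 3 * s := by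
  obtain rfl : z = 1 - x - y := by linarith
  nlinarith [mul_nonneg hx hs.le, mul_nonneg hx ht,
    mul_nonneg (sub_nonneg.2 hcol) (by positivity : 0 ≤ s + 12 * t)]

lemma solanU_lt_solanU_single_add_one {p q : Fin 3 → ℝ} (hp : p ∈ stdSimplex ℝ (Fin 3))
    {b : Fin 3} (hq_pos : 0 < q b) (hq_prev : q (b - 1) = 0) (hq_next : 0 ≤ q (b + 1))
    (hcol : p (b + 1) - 10 * p b ≤ p b - 10 * p (b - 1)) :
    solanU p q < solanU (Pi.single (b + 1) 1) q := by
  have hpsum := hp.2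
  rw [Fin.sum_univ_three_around _ b] at hpsum
  rw [solanU_eq_sum, Fin.sum_univ_three_around _ b, solanU_single_left]
  simp only [sub_add_cancel, add_sub_cancel_right, Fin.add_one_add_one_eq_sub_one,
    Fin.sub_one_sub_one_eq_add_one, hq_prev]
  linarith [solan_payoff_lt_deviation (hp.1 (b - 1)) hpsum hq_pos hq_next hcol]

lemma solanV_sum_single_right (p : Fin 3 → ℝ) (hp : p ∈ stdSimplex ℝ (Fin 3)) :
    ∑ b, solanV p (Pi.single b 1) = -9 := by
  have hpsum := hp.2
  simp only [solanV_single_right, Fin.sum_univ_three] at hpsum ⊢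
  simp [show (-1 : Fin 3) = 2 from rfl]
  linarith

theorem solan_not_isConstrainedNashOn {p q : Fin 3 → ℝ} (hp : p ∈ stdSimplex ℝ (Fin 3))
    (hq : q ∈ stdSimplex ℝ (Fin 3)) :
    ¬ IsConstrainedNashOn (stdSimplex ℝ (Fin 3)) (stdSimplex ℝ (Fin 3)) solanU solanV 0 0 p q := by
  intro h
  set c : Fin 3 → ℝ := fun b => solanV p (Pi.single b 1) with hc_def
  have hbest : IsMaxOn (solanV p) (stdSimplex ℝ (Fin 3)) q := h.isMaxOn_right fun q' hq' => by
    simpa using solanV_le_solanU hp.1 hq'.1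
  have hV : solanV p q = ∑ b, q b * c b := by
    simp only [hc_def, solanV_single_right]; exact solanV_eq_sum_right p q
  have hc : ∀ b, c b ≤ solanV p q := fun b => hbest (single_mem_stdSimplex ℝ b)
  have hsupp : ∀ b, 0 < q b → c b = solanV p q := fun b hb => by
    rw [hV] at hc ⊢; exact stdSimplex.apply_eq_sum_mul_of_forall_le hq hc hb
  obtain ⟨i, -, hi⟩ : ∃ i ∈ univ, 0 < q i :=
    exists_lt_of_sum_lt (f := fun _ => 0) (by simp [hq.2])
  obtain ⟨j, -, hj⟩ : ∃ j ∈ univ, c j < solanV p q := exists_lt_of_sum_lt (by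
    simp only [hc_def, solanV_sum_single_right p hp, sum_const, card_univ, Fintype.card_fin,
      nsmul_eq_mul, Nat.cast_ofNat]
    linarith [h.2.1])
  obtain ⟨b, hb, hb'⟩ :=
    Fin.exists_and_not_sub_one (P := (0 < q ·)) hi fun hj' => (hsupp j hj').not_lt hj
  have hqb' : q (b - 1) = 0 := le_antisymm (not_lt.1 hb') (hq.1 _)
  have hsafe : 0 ≤ solanV (Pi.single (b + 1) 1) q := by
    simpa [solanV_single_left, Fin.add_one_add_one_eq_sub_one, hqb'] using hq.1 (b + 1)
  have hcol : c (b + 1) ≤ c b := hsupp b hb ▸ hc (b + 1)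
  simp only [hc_def, solanV_single_right, add_sub_cancel_right] at hcol
  exact (h.le_of_safe (single_mem_stdSimplex ℝ (b + 1)) hsafe).not_gt
    (solanU_lt_solanU_single_add_one hp hb hqb' (hq.1 _) hcol)

/-- The mixed extension of Solan's 3×3 game admits a `(0,0)`-feasible contract but
no `(0,0)`-constrained Nash equilibrium; in particular, it is not feasible. -/
theorem solan_game_not_feasible :
    (∃ p ∈ stdSimplex ℝ (Fin 3), ∃ q ∈ stdSimplex ℝ (Fin 3),
        (0 : ℝ) ≤ solanU p q ∧ (0 : ℝ) ≤ solanV p q) ∧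
    (¬ ∃ p ∈ stdSimplex ℝ (Fin 3), ∃ q ∈ stdSimplex ℝ (Fin 3),
        (0 : ℝ) ≤ solanU p q ∧ (0 : ℝ) ≤ solanV p q ∧
        (∀ p' ∈ stdSimplex ℝ (Fin 3), solanU p q < solanU p' q → solanV p' q < 0) ∧
        (∀ q' ∈ stdSimplex ℝ (Fin 3), solanV p q < solanV p q' → solanU p q' < 0)) ∧
    ¬ FeasibleOn (stdSimplex ℝ (Fin 3)) (stdSimplex ℝ (Fin 3)) solanU solanV := by
  have hcontract : ∃ p ∈ stdSimplex ℝ (Fin 3), ∃ q ∈ stdSimplex ℝ (Fin 3),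
      (0 : ℝ) ≤ solanU p q ∧ (0 : ℝ) ≤ solanV p q :=
    ⟨_, single_mem_stdSimplex ℝ 1, _, single_mem_stdSimplex ℝ 1,
      by norm_num [solanU_single_left], by norm_num [solanV_single_left]⟩
  have hno : ¬ ∃ p ∈ stdSimplex ℝ (Fin 3), ∃ q ∈ stdSimplex ℝ (Fin 3),
      IsConstrainedNashOn (stdSimplex ℝ (Fin 3)) (stdSimplex ℝ (Fin 3)) solanU solanV 0 0 p q :=
    fun ⟨_, hp, _, hq, h⟩ => solan_not_isConstrainedNashOn hp hq h
  exact ⟨hcontract, hno, fun hF => hno (hF 0 0 hcontract)⟩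
end

section
/- Let X and Y be nonempty compact convex subsets of Hausdorff real topological vector spaces and let g : X×Y→ℝ be continuous, quasi-concave in its first argument for every fixed second argument, and quasi-convex in its second argument for every fixed first argument. Then the zero-sum game (X,Y,g) is feasible. -/
open Set

section Boundary

variable {E F β : Type*} [TopologicalSpace E] [TopologicalSpace F] [T2Space E] [T2Space F]
  [LinearOrder β] [TopologicalSpace β] [OrderClosedTopology β]
  {X : Set E} {Y : Set F} {g : E → F → β}

theorem IsCompact.sep_exists_le_apply (hX : IsCompact X) (hY : IsCompact Y)
    (hg : ContinuousOn (Function.uncurry g) (X ×ˢ Y)) (c : β) :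
    IsCompact {y ∈ Y | ∃ x ∈ X, c ≤ g x y} := by
  have hK : IsCompact (X ×ˢ Y ∩ Function.uncurry g ⁻¹' Ici c) :=
    (hX.prod hY).of_isClosed_subset
      (hg.preimage_isClosed_of_isClosed (hX.isClosed.prod hY.isClosed) isClosed_Ici)
      inter_subset_left
  convert hK.image continuous_snd using 1
  ext y
  constructor
  · rintro ⟨hy, x, hx, hc⟩
    exact ⟨(x, y), ⟨⟨hx, hy⟩, hc⟩, rfl⟩
  · rintro ⟨⟨x, y⟩, ⟨⟨hx, hy⟩, hc⟩, rfl⟩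
    exact ⟨hy, x, hx, hc⟩

/-- Intermediate value property of `y ↦ max_{x ∈ X} g x y` on a connected set `Y`. -/
theorem exists_eq_and_forall_le_of_isPreconnected (hX : IsCompact X) (hY : IsCompact Y)
    (hYc : IsPreconnected Y) (hg : ContinuousOn (Function.uncurry g) (X ×ˢ Y)) {c : β}
    (hlow : ∃ y ∈ Y, ∀ x ∈ X, g x y ≤ c) (hhigh : ∃ x ∈ X, ∃ y ∈ Y, c ≤ g x y) :
    ∃ x ∈ X, ∃ y ∈ Y, g x y = c ∧ ∀ x' ∈ X, g x' y ≤ c := by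
  have hclosed : IsClosed (Y ∩ ⋂ x ∈ X, Y ∩ (g x) ⁻¹' Iic c) :=
    hY.isClosed.inter <| isClosed_biInter fun x hx =>
      (hg.uncurry_left x hx).preimage_isClosed_of_isClosed hY.isClosed isClosed_Iic
  have hcover : Y ⊆ {y ∈ Y | ∃ x ∈ X, c ≤ g x y} ∪ (Y ∩ ⋂ x ∈ X, Y ∩ (g x) ⁻¹' Iic c) := by
    intro y hy
    by_cases h : ∃ x ∈ X, c ≤ g x y
    · exact Or.inl ⟨hy, h⟩
    · simp only [not_exists, not_and, not_le] at h
      exact Or.inr ⟨hy, mem_iInter₂.2 fun x hx => ⟨hy, (h x hx).le⟩⟩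
  obtain ⟨x₀, hx₀, y₀, hy₀, h₀⟩ := hhigh
  obtain ⟨y₁, hy₁, h₁⟩ := hlow
  obtain ⟨y, hy, ⟨-, x, hx, hxy⟩, -, hmax⟩ :=
    isPreconnected_closed_iff.1 hYc _ _ (hX.sep_exists_le_apply hY hg c).isClosed hclosed hcover
      ⟨y₀, hy₀, hy₀, x₀, hx₀, h₀⟩
      ⟨y₁, hy₁, hy₁, mem_iInter₂.2 fun x hx => ⟨hy₁, h₁ x hx⟩⟩
  have hle : ∀ x' ∈ X, g x' y ≤ c := fun x' hx' => (mem_iInter₂.1 hmax x' hx').2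
  exact ⟨x, hx, y, hy, (hle x hx).antisymm hxy, hle⟩

theorem exists_eq_and_forall_ge_of_isPreconnected (hX : IsCompact X) (hY : IsCompact Y)
    (hXc : IsPreconnected X) (hg : ContinuousOn (Function.uncurry g) (X ×ˢ Y)) {c : β}
    (hhigh : ∃ x ∈ X, ∀ y ∈ Y, c ≤ g x y) (hlow : ∃ x ∈ X, ∃ y ∈ Y, g x y ≤ c) :
    ∃ x ∈ X, ∃ y ∈ Y, g x y = c ∧ ∀ y' ∈ Y, c ≤ g x y' := by
  have hg' : ContinuousOn (Function.uncurry fun y x => OrderDual.toDual (g x y)) (Y ×ˢ X) :=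
    continuous_toDual.comp_continuousOn <|
      hg.comp continuous_swap.continuousOn fun p hp => ⟨hp.2, hp.1⟩
  obtain ⟨x₀, hx₀, h₀⟩ := hhigh
  obtain ⟨x₁, hx₁, y₁, hy₁, h₁⟩ := hlow
  obtain ⟨y, hy, x, hx, hval, hmin⟩ := exists_eq_and_forall_le_of_isPreconnected hY hX hXc hg'
    (c := OrderDual.toDual c) ⟨x₀, hx₀, fun y hy => OrderDual.toDual_le_toDual.2 (h₀ y hy)⟩
    ⟨y₁, hy₁, x₁, hx₁, OrderDual.toDual_le_toDual.2 h₁⟩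
  exact ⟨x, hx, y, hy, hval, hmin⟩

end Boundary

theorem sion_zero_sum_feasible_general
    {E F : Type*}
    [AddCommGroup E] [Module ℝ E] [TopologicalSpace E]
    [IsTopologicalAddGroup E] [ContinuousSMul ℝ E] [T2Space E]
    [AddCommGroup F] [Module ℝ F] [TopologicalSpace F]
    [IsTopologicalAddGroup F] [ContinuousSMul ℝ F] [T2Space F]
    (X : Set E) (Y : Set F)
    (hXcomp : IsCompact X) (hYcomp : IsCompact Y)
    (hXconv : Convex ℝ X) (hYconv : Convex ℝ Y)
    (g : E → F → ℝ)
    (hg : ContinuousOn (fun p : E × F => g p.1 p.2) (X ×ˢ Y))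
    (hqc : ∀ y ∈ Y, QuasiconcaveOn ℝ X fun x => g x y)
    (hqv : ∀ x ∈ X, QuasiconvexOn ℝ Y fun y => g x y) :
    FeasibleOn X Y g (fun x y => -g x y) := by
  rintro u0 v0 ⟨x₀, hx₀, y₀, hy₀, hu₀, hv₀ : v0 ≤ -g x₀ y₀⟩
  obtain ⟨b, hb, a, ha, hab⟩ := Sion.exists_isSaddlePointOn (f := fun y x => g x y)
    ⟨y₀, hy₀⟩ hYconv hYcomp (fun x hx => (hg.uncurry_left x hx).lowerSemicontinuousOn) hqv
    hXconv ⟨x₀, hx₀⟩ hXcomp (fun y hy => (hg.uncurry_right y hy).upperSemicontinuousOn) hqc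
  have hcol : ∀ x ∈ X, g x b ≤ g a b := fun x hx => hab b hb x hx
  have hrow : ∀ y ∈ Y, g a b ≤ g a y := fun y hy => hab y hy a ha
  rcases lt_or_ge (g a b) u0 with hlow | hu
  · obtain ⟨x', hx', y', hy', hval, hmax⟩ :=
      exists_eq_and_forall_le_of_isPreconnected hXcomp hYcomp hYconv.isPreconnected hg
        ⟨b, hb, fun x hx => (hcol x hx).trans hlow.le⟩ ⟨x₀, hx₀, y₀, hy₀, hu₀⟩
    exact ⟨x', hx', y', hy', hval.ge, by linarith, fun x hx h => by linarith [hmax x hx],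
      fun y hy h => by linarith⟩
  rcases lt_or_ge (-v0) (g a b) with hhigh | hv
  · obtain ⟨x', hx', y', hy', hval, hmin⟩ :=
      exists_eq_and_forall_ge_of_isPreconnected hXcomp hYcomp hXconv.isPreconnected hg
        ⟨a, ha, fun y hy => hhigh.le.trans (hrow y hy)⟩ ⟨x₀, hx₀, y₀, hy₀, by linarith⟩
    exact ⟨x', hx', y', hy', by linarith, by linarith, fun x hx h => by linarith,
      fun y hy h => by linarith [hmin y hy]⟩
  exact ⟨a, ha, b, hb, hu, by linarith, fun x hx h => by linarith [hcol x hx],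
    fun y hy h => by linarith [hrow y hy]⟩

/-- A zero-sum game over nonempty compact convex subsets of Hausdorff real
topological vector spaces whose payoff is continuous, quasi-concave in the first
variable and quasi-convex in the second variable, is feasible. -/
theorem sion_zero_sum_feasible
    {E F : Type*}
    [AddCommGroup E] [Module ℝ E] [TopologicalSpace E]
    [IsTopologicalAddGroup E] [ContinuousSMul ℝ E] [T2Space E]
    [AddCommGroup F] [Module ℝ F] [TopologicalSpace F]
    [IsTopologicalAddGroup F] [ContinuousSMul ℝ F] [T2Space F]
    (X : Set E) (Y : Set F) (hXne : X.Nonempty) (hYne : Y.Nonempty)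
    (hXcomp : IsCompact X) (hYcomp : IsCompact Y)
    (hXconv : Convex ℝ X) (hYconv : Convex ℝ Y)
    (g : E → F → ℝ)
    (hg : ContinuousOn (fun p : E × F => g p.1 p.2) (X ×ˢ Y))
    (hqc : ∀ y ∈ Y, QuasiconcaveOn ℝ X fun x => g x y)
    (hqv : ∀ x ∈ X, QuasiconvexOn ℝ Y fun y => g x y) :
    FeasibleOn X Y g (fun x y => -g x y) :=
  sion_zero_sum_feasible_general X Y hXcomp hYcomp hXconv hYconv g hg hqc hqv
end

section
/- Consider a matching game with |M| = |W| in which every game is zero-sum, i.e., V_{i,j} = -U_{i,j} for all (i,j) ∈ M×W. Let π=(μ,x,y) and π'=(μ',x',y') be two externally stable matching profiles whose matchings are complete (bijections M ≃ W) and which satisfy condition (**): for every man i, if u_i(π) = u_i(π') then μ_i = μ'_i, and for every woman j, if v_j(π) = v_j(π') then μ_j = μ'_j. Define π∧ by matching each man i as in whichever of π, π' gives him the smaller utility, with the corresponding strategy pair. Then π∧ is a well-defined matching profile, it gives each woman j the larger of her two utilities max(v_j(π), v_j(π')) (i.e., the men-minimum operation coincides with the women-maximum operation), and π∧ is externally stable.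 -/
variable {M W : Type*} {X : M → Type*} {Y : W → Type*}

lemma uMan_eq_of (U : ∀ i j, X i → Y j → ℝ) (ubar : M → ℝ)
    {μ : Matching M W} (x : ∀ i, X i) (y : ∀ j, Y j) {i : M} {j : W}
    (h : μ.muM i = some j) : uMan U ubar μ x y i = U i j (x i) (y j) := by
  simp [uMan, h]

lemma vWoman_eq_of (V : ∀ i j, X i → Y j → ℝ) (vbar : W → ℝ)
    {μ : Matching M W} (x : ∀ i, X i) (y : ∀ j, Y j) {i : M} {j : W}
    (h : μ.muW j = some i) : vWoman V vbar μ x y j = V i j (x i) (y j) := by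
  simp [vWoman, h]

/-- In a matching game with `|M| = |W|` in which all games are zero-sum, the
men-minimum of two complete externally stable matching profiles satisfying (**)
is a well-defined matching profile which coincides with the women-maximum and is
externally stable. -/
theorem zero_sum_men_min_is_women_max_externally_stable
    {M W : Type*} [Fintype M] [Fintype W]
    {X : M → Type*} {Y : W → Type*}
    [∀ i, TopologicalSpace (X i)] [∀ i, CompactSpace (X i)] [∀ i, Nonempty (X i)]
    [∀ j, TopologicalSpace (Y j)] [∀ j, CompactSpace (Y j)] [∀ j, Nonempty (Y j)]
    (hcard : Fintype.card M = Fintype.card W)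
    (U V : ∀ i j, X i → Y j → ℝ)
    (hU : ∀ i j, Continuous fun p : X i × Y j => U i j p.1 p.2)
    (hV : ∀ i j, Continuous fun p : X i × Y j => V i j p.1 p.2)
    -- every game is zero-sum
    (hzs : ∀ i j (s : X i) (t : Y j), V i j s t = -U i j s t)
    (ubar : M → ℝ) (vbar : W → ℝ)
    (μ μ' : Matching M W) (x x' : ∀ i, X i) (y y' : ∀ j, Y j)
    -- the two matchings are complete
    (hcompM : ∀ i, (μ.muM i).isSome) (hcompW : ∀ j, (μ.muW j).isSome)
    (hcompM' : ∀ i, (μ'.muM i).isSome) (hcompW' : ∀ j, (μ'.muW j).isSome)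
    (hstab : ExternallyStable U V ubar vbar μ x y)
    (hstab' : ExternallyStable U V ubar vbar μ' x' y')
    -- condition (**)
    (hssM : ∀ i, uMan U ubar μ x y i = uMan U ubar μ' x' y' i → μ.muM i = μ'.muM i)
    (hssW : ∀ j, vWoman V vbar μ x y j = vWoman V vbar μ' x' y' j → μ.muW j = μ'.muW j) :
    ∃ ν : Matching M W,
      -- each man is matched as in whichever of the two profiles gives him the
      -- smaller utility (at a tie the two agree by (**))
      (∀ i, uMan U ubar μ x y i ≤ uMan U ubar μ' x' y' i → ν.muM i = μ.muM i) ∧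
      (∀ i, uMan U ubar μ' x' y' i ≤ uMan U ubar μ x y i → ν.muM i = μ'.muM i) ∧
      -- every choice of strategies where each matched couple plays the strategy
      -- pair coming from the selected (worse-for-the-man) profile gives every
      -- woman the larger of her two utilities and is externally stable
      ∀ (xv : ∀ i, X i) (yv : ∀ j, Y j),
        (∀ i j, ν.muM i = some j →
          ((uMan U ubar μ x y i ≤ uMan U ubar μ' x' y' i ∧ xv i = x i ∧ yv j = y j) ∨
           (uMan U ubar μ' x' y' i ≤ uMan U ubar μ x y i ∧ xv i = x' i ∧ yv j = y' j))) →
        (∀ j, vWoman V vbar ν xv yv j =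
            max (vWoman V vbar μ x y j) (vWoman V vbar μ' x' y' j)) ∧
        ExternallyStable U V ubar vbar ν xv yv := by
  classical
  -- zero-sum link between the utilities of matched partners
  have hzsM : ∀ (ρ : Matching M W) (xx : ∀ i, X i) (yy : ∀ j, Y j) (i : M) (j : W),
      ρ.muM i = some j →
      vWoman V vbar ρ xx yy j = -(uMan U ubar ρ xx yy i) := by
    intro ρ xx yy i j h
    rw [uMan_eq_of U ubar xx yy h, vWoman_eq_of V vbar xx yy ((ρ.coherent i j).1 h), hzs]
  -- men pick the partner from the profile giving them the smaller utility
  obtain ⟨σ, hσ1, hσ2⟩ : ∃ σ : M → W,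
      (∀ i, uMan U ubar μ x y i ≤ uMan U ubar μ' x' y' i → μ.muM i = some (σ i)) ∧
      (∀ i, ¬ uMan U ubar μ x y i ≤ uMan U ubar μ' x' y' i → μ'.muM i = some (σ i)) := by
    refine ⟨fun i => if uMan U ubar μ x y i ≤ uMan U ubar μ' x' y' i
        then (μ.muM i).get (hcompM i) else (μ'.muM i).get (hcompM' i), ?_, ?_⟩
    · intro i h
      simp only [if_pos h, Option.some_get]
    · intro i h
      simp only [if_neg h, Option.some_get]
  -- women pick the partner from the profile giving them the larger utility
  obtain ⟨τ, hτ1, hτ2⟩ : ∃ τ : W → M,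
      (∀ j, vWoman V vbar μ' x' y' j ≤ vWoman V vbar μ x y j → μ.muW j = some (τ j)) ∧
      (∀ j, ¬ vWoman V vbar μ' x' y' j ≤ vWoman V vbar μ x y j → μ'.muW j = some (τ j)) := by
    refine ⟨fun j => if vWoman V vbar μ' x' y' j ≤ vWoman V vbar μ x y j
        then (μ.muW j).get (hcompW j) else (μ'.muW j).get (hcompW' j), ?_, ?_⟩
    · intro j h
      simp only [if_pos h, Option.some_get]
    · intro j h
      simp only [if_neg h, Option.some_get]
  -- Key lemma A: if woman j weakly prefers π then her π-partner weakly prefers π'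
  have hkeyA : ∀ j, vWoman V vbar μ' x' y' j ≤ vWoman V vbar μ x y j →
      uMan U ubar μ x y (τ j) ≤ uMan U ubar μ' x' y' (τ j) := by
    intro j hc
    have hW := hτ1 j hc
    have hM : μ.muM (τ j) = some j := (μ.coherent _ j).2 hW
    have h1 := hzsM μ x y (τ j) j hM
    by_cases hM' : μ'.muM (τ j) = some j
    · have h2 := hzsM μ' x' y' (τ j) j hM'
      linarith
    · rcases eq_or_lt_of_le hc with heq | hlt
      · have hww := hssW j heq.symm
        exact absurd ((μ'.coherent _ j).2 (hww ▸ hW)) hM'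
      · have hnb := hstab'.2.2 (τ j) j hM' (x (τ j)) (y j)
        have hUv : U (τ j) j (x (τ j)) (y j) = uMan U ubar μ x y (τ j) :=
          (uMan_eq_of U ubar x y hM).symm
        have hVv : V (τ j) j (x (τ j)) (y j) = vWoman V vbar μ x y j :=
          (vWoman_eq_of V vbar x y hW).symm
        by_contra hnle
        push_neg at hnle
        exact hnb ⟨by rw [hUv]; exact hnle, by rw [hVv]; exact hlt⟩
  -- Key lemma B: if woman j strictly prefers π' then her π'-partner strictly prefers π
  have hkeyB : ∀ j, ¬ vWoman V vbar μ' x' y' j ≤ vWoman V vbar μ x y j →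
      uMan U ubar μ' x' y' (τ j) < uMan U ubar μ x y (τ j) := by
    intro j hc
    have hW := hτ2 j hc
    have hM' : μ'.muM (τ j) = some j := (μ'.coherent _ j).2 hW
    have h2 := hzsM μ' x' y' (τ j) j hM'
    push_neg at hc
    by_cases hM : μ.muM (τ j) = some j
    · have h1 := hzsM μ x y (τ j) j hM
      linarith
    · have hnb := hstab.2.2 (τ j) j hM (x' (τ j)) (y' j)
      have hUv : U (τ j) j (x' (τ j)) (y' j) = uMan U ubar μ' x' y' (τ j) :=
        (uMan_eq_of U ubar x' y' hM').symm
      have hVv : V (τ j) j (x' (τ j)) (y' j) = vWoman V vbar μ' x' y' j :=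
        (vWoman_eq_of V vbar x' y' hW).symm
      by_contra hnlt
      push_neg at hnlt
      rcases eq_or_lt_of_le hnlt with heq | hlt
      · exact hM (by rw [hssM _ heq]; exact hM')
      · exact hnb ⟨by rw [hUv]; exact hlt, by rw [hVv]; exact hc⟩
  -- σ is a left inverse of τ
  have hkey : ∀ j, σ (τ j) = j := by
    intro j
    by_cases hc : vWoman V vbar μ' x' y' j ≤ vWoman V vbar μ x y j
    · have h1 := hσ1 (τ j) (hkeyA j hc)
      have hM : μ.muM (τ j) = some j := (μ.coherent _ j).2 (hτ1 j hc)
      exact Option.some_inj.mp (h1.symm.trans hM)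
    · have h1 := hσ2 (τ j) (not_le.mpr (hkeyB j hc))
      have hM' : μ'.muM (τ j) = some j := (μ'.coherent _ j).2 (hτ2 j hc)
      exact Option.some_inj.mp (h1.symm.trans hM')
  have hτinj : Function.Injective τ := fun j j' h => by
    rw [← hkey j, ← hkey j', h]
  have hτbij : Function.Bijective τ :=
    (Fintype.bijective_iff_injective_and_card τ).2 ⟨hτinj, hcard.symm⟩
  have hkey2 : ∀ i, τ (σ i) = i := by
    intro i
    obtain ⟨j, hj⟩ := hτbij.2 i
    rw [← hj, hkey j]
  -- the men-minimum matching
  obtain ⟨ν, hνM, hνW⟩ : ∃ ν : Matching M W,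
      (∀ i, ν.muM i = some (σ i)) ∧ (∀ j, ν.muW j = some (τ j)) := by
    refine ⟨⟨fun i => some (σ i), fun j => some (τ j), ?_⟩, fun _ => rfl, fun _ => rfl⟩
    intro i j
    simp only [Option.some_inj]
    exact ⟨fun h => by rw [← h, hkey2 i], fun h => by rw [← h, hkey j]⟩
  refine ⟨ν, ?_, ?_, ?_⟩
  · intro i h
    rw [hνM i]
    exact (hσ1 i h).symm
  · intro i h
    rw [hνM i]
    by_cases hc : uMan U ubar μ x y i ≤ uMan U ubar μ' x' y' i
    · have heq := le_antisymm hc h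
      rw [← hssM i heq]
      exact (hσ1 i hc).symm
    · exact (hσ2 i hc).symm
  · intro xv yv hxy
    -- each man gets the minimum of his two utilities
    have humin : ∀ i, uMan U ubar ν xv yv i
        = min (uMan U ubar μ x y i) (uMan U ubar μ' x' y' i) := by
      intro i
      rcases hxy i (σ i) (hνM i) with ⟨h12, hx, hy⟩ | ⟨h21, hx, hy⟩
      · have hM : μ.muM i = some (σ i) := hσ1 i h12
        rw [uMan_eq_of U ubar xv yv (hνM i), hx, hy, ← uMan_eq_of U ubar x y hM,
          min_eq_left h12]
      · by_cases hc : uMan U ubar μ x y i ≤ uMan U ubar μ' x' y' i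
        · have heq := le_antisymm hc h21
          have hM' : μ'.muM i = some (σ i) := by rw [← hssM i heq]; exact hσ1 i hc
          rw [uMan_eq_of U ubar xv yv (hνM i), hx, hy, ← uMan_eq_of U ubar x' y' hM',
            min_eq_right h21]
        · have hM' : μ'.muM i = some (σ i) := hσ2 i hc
          rw [uMan_eq_of U ubar xv yv (hνM i), hx, hy, ← uMan_eq_of U ubar x' y' hM',
            min_eq_right h21]
    -- each woman gets the maximum of her two utilities
    have hvmax : ∀ j, vWoman V vbar ν xv yv j
        = max (vWoman V vbar μ x y j) (vWoman V vbar μ' x' y' j) := by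
      intro j
      have hνMj : ν.muM (τ j) = some j := by rw [hνM (τ j), hkey j]
      rcases hxy (τ j) j hνMj with ⟨h12, hx, hy⟩ | ⟨h21, hx, hy⟩
      · have hc : vWoman V vbar μ' x' y' j ≤ vWoman V vbar μ x y j := by
          by_contra hc
          exact absurd h12 (not_le.mpr (hkeyB j hc))
        have hW := hτ1 j hc
        rw [vWoman_eq_of V vbar xv yv (hνW j), hx, hy, ← vWoman_eq_of V vbar x y hW,
          max_eq_left hc]
      · by_cases hc : vWoman V vbar μ' x' y' j ≤ vWoman V vbar μ x y j
        · have heq := le_antisymm (hkeyA j hc) h21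
          have hM : μ.muM (τ j) = some j := (μ.coherent _ j).2 (hτ1 j hc)
          have hM' : μ'.muM (τ j) = some j := by rw [← hssM _ heq]; exact hM
          have hW' : μ'.muW j = some (τ j) := (μ'.coherent _ j).1 hM'
          have h1 := hzsM μ x y (τ j) j hM
          have h2 := hzsM μ' x' y' (τ j) j hM'
          have hveq : vWoman V vbar μ x y j ≤ vWoman V vbar μ' x' y' j := by
            rw [h1, h2, heq]
          rw [vWoman_eq_of V vbar xv yv (hνW j), hx, hy, ← vWoman_eq_of V vbar x' y' hW',
            max_eq_right hveq]
        · have hW' := hτ2 j hc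
          rw [vWoman_eq_of V vbar xv yv (hνW j), hx, hy, ← vWoman_eq_of V vbar x' y' hW',
            max_eq_right (le_of_not_ge hc)]
    refine ⟨hvmax, ?_, ?_, ?_⟩
    · intro i
      rw [humin i]
      exact le_min (hstab.1 i) (hstab'.1 i)
    · intro j
      rw [hvmax j]
      exact le_trans (hstab.2.1 j) (le_max_left _ _)
    · intro i j hne s t
      rw [humin i, hvmax j]
      rintro ⟨hUlt, hVlt⟩
      by_cases hc : uMan U ubar μ x y i ≤ uMan U ubar μ' x' y' i
      · rw [min_eq_left hc] at hUlt
        have hV1 : vWoman V vbar μ x y j < V i j s t :=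
          lt_of_le_of_lt (le_max_left _ _) hVlt
        by_cases hM : μ.muM i = some j
        · have h1 := hzsM μ x y i j hM
          have h2 := hzs i j s t
          linarith
        · exact hstab.2.2 i j hM s t ⟨hUlt, hV1⟩
      · rw [min_eq_right (le_of_not_ge hc)] at hUlt
        have hV2 : vWoman V vbar μ' x' y' j < V i j s t :=
          lt_of_le_of_lt (le_max_right _ _) hVlt
        by_cases hM' : μ'.muM i = some j
        · have h2 := hzsM μ' x' y' i j hM'
          have h3 := hzs i j s t
          linarith
        · exact hstab'.2.2 i j hM' s t ⟨hUlt, hV2⟩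
end

section
/- In the fixed-game matching setting, let (x*,y*) be a Nash equilibrium of G and let μ be any matching. Then the matching profile in which every matched couple plays (x*,y*) (i.e., x_i = x* for all i ∈ M and y_j = y* for all j ∈ W) is Nash stable and unilaterally externally stable. -/
/-- Unilateral external stability in the fixed-game matching setting: no unmatched
pair can Pareto improve via a unilateral deviation of one of its members. -/
def UnilatExtStableFixed {S T : Type*} (U V : S → T → ℝ) {n : ℕ}
    (μ : Equiv.Perm (Fin n)) (x : Fin n → S) (y : Fin n → T) : Prop :=
  ∀ i j : Fin n, μ i ≠ j →
    ¬ ((∃ s : S, U (x i) (y (μ i)) < U s (y j) ∧ V (x (μ.symm j)) (y j) < V s (y j)) ∨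
       (∃ t : T, U (x i) (y (μ i)) < U (x i) t ∧ V (x (μ.symm j)) (y j) < V (x i) t))

/-- If every matched couple plays the same Nash equilibrium `(x*, y*)` of the fixed
game, the resulting matching profile is Nash stable and unilaterally externally
stable. -/
theorem nash_profile_is_unilaterally_externally_stable
    {S T : Type*} [Nonempty S] [Nonempty T] (U V : S → T → ℝ)
    (n : ℕ) (μ : Equiv.Perm (Fin n))
    (xstar : S) (ystar : T)
    (hNE : (∀ s : S, U s ystar ≤ U xstar ystar) ∧ (∀ t : T, V xstar t ≤ V xstar ystar)) :
    (∀ i : Fin n,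
      (∀ s : S, U s ((fun _ : Fin n => ystar) (μ i)) ≤
        U ((fun _ : Fin n => xstar) i) ((fun _ : Fin n => ystar) (μ i))) ∧
      (∀ t : T, V ((fun _ : Fin n => xstar) i) t ≤
        V ((fun _ : Fin n => xstar) i) ((fun _ : Fin n => ystar) (μ i)))) ∧
    UnilatExtStableFixed U V μ (fun _ => xstar) (fun _ => ystar) := by
  obtain ⟨hU, hV⟩ := hNE
  refine ⟨fun i => ⟨fun s => hU s, fun t => hV t⟩, ?_⟩
  intro i j _ h
  rcases h with ⟨s, hs, _⟩ | ⟨t, _, ht⟩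
  · exact absurd (hU s) (not_le.mpr hs)
  · exact absurd (hV t) (not_le.mpr ht)
end
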